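/- arXiv:2301.13706 — 5 statements merged into one kernel-verified Lean document; each statement's English description precedes it below -/
import Mathlib

section
/- Let U : ℝ^d → ℝ be continuously differentiable and suppose there exist ℓ ≥ 0, exponents 0 < α₁ ≤ … ≤ α_N ≤ 1 and constants 0 < L_i ≤ L such that for all x, y, ‖∇U(x) − ∇U(y)‖ ≤ (1 + ‖x‖^ℓ + ‖y‖^ℓ) ∑_{i=1}^N L_i ‖x − y‖^{α_i}. Then for all x, y, U(y) ≤ U(x) + ⟨∇U(x), y − x⟩ + (2L/(1+α₁)) (1 + ‖x‖^ℓ + ‖y‖^ℓ) ∑_{i=1}^N ‖x − y‖^{1+α_i}. -/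
/-!
By the fundamental theorem of calculus along the segment `z t = x + t (y - x)`,
`U y - U x - ⟪∇U x, y - x⟫ = ∫₀¹ ⟪∇U (z t) - ∇U x, y - x⟫ dt`. Since `‖z t‖ ≤ max ‖x‖ ‖y‖`, the
weight `1 + ‖z t‖^ℓ + ‖x‖^ℓ` is at most twice `1 + ‖x‖^ℓ + ‖y‖^ℓ`, and `‖z t - x‖ = t ‖y - x‖`, so
the integrand is bounded by a sum of powers `t ^ αᵢ`, whose integrals `1 / (1 + αᵢ)` are at most
`1 / (1 + α₁)`.
-/

open MeasureTheory Real Set intervalIntegral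
open scoped Gradient RealInnerProductSpace

section Segment

variable {E : Type*} [SeminormedAddCommGroup E] [NormedSpace ℝ E]

theorem norm_add_smul_sub_rpow_le {ℓ : ℝ} (hℓ : 0 ≤ ℓ) (x y : E) {t : ℝ} (ht : t ∈ Icc 0 1) :
    ‖x + t • (y - x)‖ ^ ℓ ≤ ‖x‖ ^ ℓ + ‖y‖ ^ ℓ := by
  have hmem : x + t • (y - x) ∈ segment ℝ x y := by
    rw [segment_eq_image']
    exact ⟨t, ht, rfl⟩
  have hle : ‖x + t • (y - x)‖ ≤ max ‖x‖ ‖y‖ :=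
    (convexOn_norm convex_univ).le_on_segment (mem_univ x) (mem_univ y) hmem
  calc ‖x + t • (y - x)‖ ^ ℓ ≤ max ‖x‖ ‖y‖ ^ ℓ := by gcongr
    _ ≤ ‖x‖ ^ ℓ + ‖y‖ ^ ℓ := by
      rcases max_cases ‖x‖ ‖y‖ with ⟨h, -⟩ | ⟨h, -⟩ <;> rw [h] <;>
        linarith [rpow_nonneg (norm_nonneg x) ℓ, rpow_nonneg (norm_nonneg y) ℓ]

end Segment

section Taylor

variable {E : Type*} [NormedAddCommGroup E] [InnerProductSpace ℝ E] [CompleteSpace E]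
  {f : E → ℝ}

theorem ContDiff.continuous_gradient (hf : ContDiff ℝ 1 f) : Continuous (∇ f) :=
  (InnerProductSpace.toDual ℝ E).symm.continuous.comp (hf.continuous_fderiv one_ne_zero)

theorem sub_sub_inner_gradient_eq_integral (hf : ContDiff ℝ 1 f) (x y : E) :
    f y - f x - ⟪∇ f x, y - x⟫ = ∫ t in (0 : ℝ)..1, ⟪∇ f (x + t • (y - x)) - ∇ f x, y - x⟫ := by
  have hderiv (t : ℝ) :
      HasDerivAt (fun s : ℝ ↦ f (x + s • (y - x))) ⟪∇ f (x + t • (y - x)), y - x⟫ t := by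
    have hline : HasDerivAt (fun s : ℝ ↦ x + s • (y - x)) (y - x) t := by
      simpa using ((hasDerivAt_id t).smul_const (y - x)).const_add x
    exact ((hf.differentiable one_ne_zero _).hasGradientAt.hasFDerivAt).comp_hasDerivAt t hline
  have hint : IntervalIntegrable (fun t : ℝ ↦ ⟪∇ f (x + t • (y - x)), y - x⟫) volume 0 1 :=
    ((hf.continuous_gradient.comp (by fun_prop)).inner continuous_const).intervalIntegrable 0 1
  simp_rw [inner_sub_left]
  rw [integral_sub hint intervalIntegrable_const,
    integral_eq_sub_of_hasDerivAt (fun t _ ↦ hderiv t) hint]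
  simp

theorem sub_sub_inner_gradient_le_mul_integral (hf : ContDiff ℝ 1 f) {x y : E} {g : ℝ → ℝ}
    (hg : IntervalIntegrable g volume 0 1)
    (hbound : ∀ t ∈ Icc (0 : ℝ) 1, ‖∇ f (x + t • (y - x)) - ∇ f x‖ ≤ g t) :
    f y - f x - ⟪∇ f x, y - x⟫ ≤ ‖y - x‖ * ∫ t in (0 : ℝ)..1, g t := by
  have hint : IntervalIntegrable (fun t : ℝ ↦ ⟪∇ f (x + t • (y - x)) - ∇ f x, y - x⟫) volume 0 1 :=
    (((hf.continuous_gradient.comp (by fun_prop)).sub continuous_const).inner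
      continuous_const).intervalIntegrable 0 1
  rw [sub_sub_inner_gradient_eq_integral hf, ← intervalIntegral.integral_const_mul]
  refine integral_mono_on zero_le_one hint (hg.const_mul _) fun t ht ↦ ?_
  calc ⟪∇ f (x + t • (y - x)) - ∇ f x, y - x⟫
      ≤ ‖∇ f (x + t • (y - x)) - ∇ f x‖ * ‖y - x‖ := real_inner_le_norm _ _
    _ ≤ ‖y - x‖ * g t := by rw [mul_comm]; gcongr; exact hbound t ht

end Taylor

section PowerSum

variable {ι : Type*} (s : Finset ι) (c a : ι → ℝ)

theorem intervalIntegrable_sum_mul_rpow (ha : ∀ i ∈ s, -1 < a i) :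
    IntervalIntegrable (fun t : ℝ ↦ ∑ i ∈ s, c i * t ^ a i) volume 0 1 := by
  simpa only [Finset.sum_fn] using
    IntervalIntegrable.sum s fun i hi ↦ (intervalIntegrable_rpow' (ha i hi)).const_mul (c i)

theorem integral_sum_mul_rpow (ha : ∀ i ∈ s, -1 < a i) :
    ∫ t in (0 : ℝ)..1, ∑ i ∈ s, c i * t ^ a i = ∑ i ∈ s, c i / (a i + 1) := by
  rw [integral_finsetSum fun i hi ↦ (intervalIntegrable_rpow' (ha i hi)).const_mul (c i)]
  refine Finset.sum_congr rfl fun i hi ↦ ?_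
  have ha' : a i + 1 ≠ 0 := by linarith [ha i hi]
  rw [intervalIntegral.integral_const_mul, integral_rpow (Or.inl (ha i hi)), one_rpow,
    zero_rpow ha']
  ring

end PowerSum

section Mixture

variable {ι : Type*} [Fintype ι]

theorem mul_sum_mul_rpow_div_le {r C Lmax : ℝ} {a L : ι → ℝ} (hr : 0 ≤ r) (hC : 0 ≤ C)
    (hL : ∀ i, 0 ≤ L i) (hLle : ∀ i, L i ≤ Lmax) {i₀ : ι} (ha₀ : -1 < a i₀)
    (hmin : ∀ i, a i₀ ≤ a i) :
    r * ∑ i, C * L i * r ^ a i / (a i + 1) ≤ C * Lmax / (1 + a i₀) * ∑ i, r ^ (1 + a i) := by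
  rw [Finset.mul_sum, Finset.mul_sum]
  refine Finset.sum_le_sum fun i _ ↦ ?_
  have hLmax : 0 ≤ Lmax := (hL i₀).trans (hLle i₀)
  have hpos : 0 < 1 + a i₀ := by linarith
  rw [rpow_one_add' hr (by linarith [hmin i]), mul_div_assoc', div_mul_eq_mul_div]
  calc r * (C * L i * r ^ a i) / (a i + 1) = C * L i * (r * r ^ a i) / (1 + a i) := by ring
    _ ≤ C * Lmax * (r * r ^ a i) / (1 + a i₀) := by
      gcongr
      · exact hLle i
      · exact hmin i

variable {E : Type*} [NormedAddCommGroup E] [InnerProductSpace ℝ E] [CompleteSpace E]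
  {U : E → ℝ} {ℓ : ℝ} {α L : ι → ℝ}

theorem norm_gradient_add_smul_sub_le (hℓ : 0 ≤ ℓ) (hL : ∀ i, 0 ≤ L i)
    (hsmooth : ∀ x y, ‖∇ U x - ∇ U y‖ ≤ (1 + ‖x‖ ^ ℓ + ‖y‖ ^ ℓ) * ∑ i, L i * ‖x - y‖ ^ α i)
    (x y : E) {t : ℝ} (ht : t ∈ Icc 0 1) :
    ‖∇ U (x + t • (y - x)) - ∇ U x‖ ≤
      ∑ i, 2 * (1 + ‖x‖ ^ ℓ + ‖y‖ ^ ℓ) * L i * ‖y - x‖ ^ α i * t ^ α i := by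
  have hdist : ‖x + t • (y - x) - x‖ = t * ‖y - x‖ := by
    rw [add_sub_cancel_left, norm_smul, norm_of_nonneg ht.1]
  have hweight : 1 + ‖x + t • (y - x)‖ ^ ℓ + ‖x‖ ^ ℓ ≤ 2 * (1 + ‖x‖ ^ ℓ + ‖y‖ ^ ℓ) := by
    linarith [norm_add_smul_sub_rpow_le hℓ x y ht, rpow_nonneg (norm_nonneg x) ℓ,
      rpow_nonneg (norm_nonneg y) ℓ]
  calc ‖∇ U (x + t • (y - x)) - ∇ U x‖
      ≤ (1 + ‖x + t • (y - x)‖ ^ ℓ + ‖x‖ ^ ℓ) * ∑ i, L i * ‖x + t • (y - x) - x‖ ^ α i :=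
        hsmooth _ _
    _ ≤ 2 * (1 + ‖x‖ ^ ℓ + ‖y‖ ^ ℓ) * ∑ i, L i * ‖x + t • (y - x) - x‖ ^ α i :=
        mul_le_mul_of_nonneg_right hweight (Finset.sum_nonneg fun i _ ↦ by positivity [hL i])
    _ = ∑ i, 2 * (1 + ‖x‖ ^ ℓ + ‖y‖ ^ ℓ) * L i * ‖y - x‖ ^ α i * t ^ α i := by
      rw [Finset.mul_sum]
      refine Finset.sum_congr rfl fun i _ ↦ ?_
      rw [hdist, mul_rpow ht.1 (norm_nonneg _)]
      ring

end Mixture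

theorem mixture_locally_smooth_descent_general
    (d N : ℕ) (hN : 0 < N)
    (U : EuclideanSpace ℝ (Fin d) → ℝ) (hU : ContDiff ℝ 1 U)
    (ℓ : ℝ) (hℓ : 0 ≤ ℓ)
    (α : Fin N → ℝ) (hα0 : ∀ i, 0 < α i) (hαmono : Monotone α)
    (L : Fin N → ℝ) (Lmax : ℝ) (hLpos : ∀ i, 0 < L i) (hLle : ∀ i, L i ≤ Lmax)
    (hsmooth : ∀ x y, ‖gradient U x - gradient U y‖ ≤
      (1 + ‖x‖ ^ ℓ + ‖y‖ ^ ℓ) * ∑ i, L i * ‖x - y‖ ^ (α i)) :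
    ∀ x y, U y ≤ U x + (inner ℝ (gradient U x) (y - x) : ℝ) +
      (2 * Lmax / (1 + α ⟨0, hN⟩)) * (1 + ‖x‖ ^ ℓ + ‖y‖ ^ ℓ) *
        ∑ i, ‖x - y‖ ^ (1 + α i) := by
  intro x y
  set A := 1 + ‖x‖ ^ ℓ + ‖y‖ ^ ℓ
  have hL : ∀ i, 0 ≤ L i := fun i ↦ (hLpos i).le
  have ha : ∀ i ∈ Finset.univ, -1 < α i := fun i _ ↦ by linarith [hα0 i]
  have htaylor := sub_sub_inner_gradient_le_mul_integral hU
    (intervalIntegrable_sum_mul_rpow _ (fun i ↦ 2 * A * L i * ‖y - x‖ ^ α i) α ha)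
    fun t ht ↦ norm_gradient_add_smul_sub_le hℓ hL hsmooth x y ht
  rw [integral_sum_mul_rpow _ _ _ ha] at htaylor
  have hcompare := mul_sum_mul_rpow_div_le (C := 2 * A) (norm_nonneg (y - x)) (by positivity)
    hL hLle (by linarith [hα0 ⟨0, hN⟩]) fun i ↦ hαmono (show ⟨0, hN⟩ ≤ i from Nat.zero_le _)
  rw [norm_sub_rev x y]
  linear_combination htaylor + hcompare

/-- descent-type upper bound under α-mixture locally smooth gradients. -/
theorem mixture_locally_smooth_descent
    (d N : ℕ) (hd : 0 < d) (hN : 0 < N)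
    (U : EuclideanSpace ℝ (Fin d) → ℝ) (hU : ContDiff ℝ 1 U)
    (ℓ : ℝ) (hℓ : 0 ≤ ℓ)
    (α : Fin N → ℝ) (hα0 : ∀ i, 0 < α i) (hα1 : ∀ i, α i ≤ 1) (hαmono : Monotone α)
    (L : Fin N → ℝ) (Lmax : ℝ) (hLpos : ∀ i, 0 < L i) (hLle : ∀ i, L i ≤ Lmax)
    (hsmooth : ∀ x y, ‖gradient U x - gradient U y‖ ≤
      (1 + ‖x‖ ^ ℓ + ‖y‖ ^ ℓ) * ∑ i, L i * ‖x - y‖ ^ (α i)) :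
    ∀ x y, U y ≤ U x + (inner ℝ (gradient U x) (y - x) : ℝ) +
      (2 * Lmax / (1 + α ⟨0, hN⟩)) * (1 + ‖x‖ ^ ℓ + ‖y‖ ^ ℓ) *
        ∑ i, ‖x - y‖ ^ (1 + α i) :=
  mixture_locally_smooth_descent_general d N hN U hU ℓ hℓ α hα0 hαmono L Lmax hLpos hLle hsmooth
end

section
/- Let 1 ≤ n−1 < α−1 ≤ n for an integer n ≥ 2, and let f(x) = ‖x‖^α on ℝ^d. Then for all x, y ∈ ℝ^d, ‖∇f(x) − ∇f(y)‖ ≤ (n+5)·α·‖x − y‖^{(α−1)/n} (1 + ‖x‖^{((n−1)(α−1))/n} + ‖y‖^{((n−1)(α−1))/n}). -/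
/-!
Up to the factor `α`, the gradient is `g x = ‖x‖ ^ β • x` with `β = α - 2 ≥ 0`. Splitting
`g x - g y = ‖y‖ ^ β • (x - y) + (‖x‖ ^ β - ‖y‖ ^ β) • x` and using convexity of `s ↦ s ^ (β + 1)`
shows that `g` is Lipschitz with constant `(β + 2) ‖x‖ ^ β` when `‖y‖ ≤ ‖x‖`; trivially also
`‖g x - g y‖ ≤ 2 ‖x‖ ^ (β + 1)`. Hence `‖g x - g y‖ ≤ (β + 2) ‖x‖ ^ β min(‖x‖, ‖x - y‖)`, and
`min(a, r) ≤ a ^ (1 - t) r ^ t` for `t = (α - 1) / n ∈ [0, 1]` gives the Hölder-type bound.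
-/

open Real

theorem rpow_sub_rpow_le_mul_rpow_mul_sub {p a b : ℝ} (hp : 1 ≤ p) (hb : 0 ≤ b) (hba : b ≤ a) :
    a ^ p - b ^ p ≤ p * a ^ (p - 1) * (a - b) := by
  rcases hba.eq_or_lt with rfl | hlt
  · simp
  have hslope := (convexOn_rpow hp).slope_le_of_hasDerivAt hb (hb.trans hlt.le) hlt
    (hasDerivAt_rpow_const (Or.inr hp))
  rwa [slope_def_field, div_le_iff₀ (sub_pos.mpr hlt)] at hslope

theorem mul_rpow_sub_rpow_le {β a b : ℝ} (hβ : 0 ≤ β) (hb : 0 ≤ b) (hba : b ≤ a) :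
    a * (a ^ β - b ^ β) ≤ (β + 1) * a ^ β * (a - b) := by
  have ha : 0 ≤ a := hb.trans hba
  have hab : b * b ^ β ≤ a * b ^ β := mul_le_mul_of_nonneg_right hba (rpow_nonneg hb β)
  have key := rpow_sub_rpow_le_mul_rpow_mul_sub (p := β + 1) (by linarith) hb hba
  rw [rpow_add_one' ha (by linarith), rpow_add_one' hb (by linarith), add_sub_cancel_right] at key
  nlinarith [mul_comm a (a ^ β), mul_comm b (b ^ β)]

theorem min_le_rpow_mul_rpow {a r t : ℝ} (ha : 0 ≤ a) (hr : 0 ≤ r) (ht0 : 0 ≤ t) (ht1 : t ≤ 1) :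
    min a r ≤ a ^ (1 - t) * r ^ t := by
  have hm : 0 ≤ min a r := le_min ha hr
  calc min a r = min a r ^ (1 - t) * min a r ^ t := by
        rw [← rpow_add' hm (by simp), sub_add_cancel, rpow_one]
    _ ≤ a ^ (1 - t) * r ^ t := by
        gcongr
        · exact min_le_left a r
        · exact min_le_right a r

theorem max_rpow_le_one_add_rpow_add_rpow {a b : ℝ} (ha : 0 ≤ a) (hb : 0 ≤ b) (A : ℝ) :
    max a b ^ A ≤ 1 + a ^ A + b ^ A := by
  have := rpow_nonneg ha A
  have := rpow_nonneg hb A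
  rcases le_total a b with h | h
  · rw [max_eq_right h]; linarith
  · rw [max_eq_left h]; linarith

section NormedSpace

variable {E : Type*} [NormedAddCommGroup E] [NormedSpace ℝ E]

theorem norm_rpow_smul_sub_rpow_smul_le_of_norm_le {β : ℝ} (hβ : 0 ≤ β) {x y : E}
    (hyx : ‖y‖ ≤ ‖x‖) :
    ‖‖x‖ ^ β • x - ‖y‖ ^ β • y‖ ≤ (β + 2) * ‖x‖ ^ β * ‖x - y‖ := by
  have hpow : ‖y‖ ^ β ≤ ‖x‖ ^ β := rpow_le_rpow (norm_nonneg y) hyx hβ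
  have hsplit : ‖x‖ ^ β • x - ‖y‖ ^ β • y = ‖y‖ ^ β • (x - y) + (‖x‖ ^ β - ‖y‖ ^ β) • x := by
    module
  have hnorms : ‖x‖ - ‖y‖ ≤ ‖x - y‖ := norm_sub_norm_le x y
  calc ‖‖x‖ ^ β • x - ‖y‖ ^ β • y‖
      ≤ ‖y‖ ^ β * ‖x - y‖ + ‖x‖ * (‖x‖ ^ β - ‖y‖ ^ β) := by
        rw [hsplit]
        refine (norm_add_le _ _).trans_eq ?_
        rw [norm_smul, norm_smul, Real.norm_of_nonneg (rpow_nonneg (norm_nonneg y) β),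
          Real.norm_of_nonneg (sub_nonneg.mpr hpow), mul_comm ‖x‖]
    _ ≤ ‖x‖ ^ β * ‖x - y‖ + (β + 1) * ‖x‖ ^ β * (‖x‖ - ‖y‖) := by
        gcongr ?_ + ?_
        · gcongr
        · exact mul_rpow_sub_rpow_le hβ (norm_nonneg y) hyx
    _ ≤ (β + 2) * ‖x‖ ^ β * ‖x - y‖ := by
        have : 0 ≤ (β + 1) * ‖x‖ ^ β := by positivity
        nlinarith

theorem norm_rpow_smul_sub_rpow_smul_le_holder_of_norm_le {β t : ℝ} (hβ : 0 ≤ β) (ht0 : 0 ≤ t)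
    (ht1 : t ≤ 1) {x y : E} (hyx : ‖y‖ ≤ ‖x‖) :
    ‖‖x‖ ^ β • x - ‖y‖ ^ β • y‖ ≤ (β + 2) * ‖x‖ ^ (β + 1 - t) * ‖x - y‖ ^ t := by
  have hcoef : 0 ≤ (β + 2) * ‖x‖ ^ β := by positivity
  have hbdd : ‖‖x‖ ^ β • x - ‖y‖ ^ β • y‖ ≤ (β + 2) * ‖x‖ ^ β * ‖x‖ :=
    calc ‖‖x‖ ^ β • x - ‖y‖ ^ β • y‖ ≤ ‖‖x‖ ^ β • x‖ + ‖‖y‖ ^ β • y‖ := norm_sub_le _ _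
      _ = ‖x‖ ^ β * ‖x‖ + ‖y‖ ^ β * ‖y‖ := by
        rw [norm_smul, norm_smul, Real.norm_of_nonneg (by positivity),
          Real.norm_of_nonneg (by positivity)]
      _ ≤ 2 * (‖x‖ ^ β * ‖x‖) := by
        have : ‖y‖ ^ β * ‖y‖ ≤ ‖x‖ ^ β * ‖x‖ := by gcongr
        linarith
      _ ≤ (β + 2) * ‖x‖ ^ β * ‖x‖ := by
        rw [mul_assoc]
        gcongr
        linarith
  calc ‖‖x‖ ^ β • x - ‖y‖ ^ β • y‖ ≤ (β + 2) * ‖x‖ ^ β * min ‖x‖ ‖x - y‖ := by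
        rw [mul_min_of_nonneg _ _ hcoef]
        exact le_min hbdd (norm_rpow_smul_sub_rpow_smul_le_of_norm_le hβ hyx)
    _ ≤ (β + 2) * ‖x‖ ^ β * (‖x‖ ^ (1 - t) * ‖x - y‖ ^ t) := by
        gcongr
        exact min_le_rpow_mul_rpow (norm_nonneg x) (norm_nonneg _) ht0 ht1
    _ = (β + 2) * ‖x‖ ^ (β + 1 - t) * ‖x - y‖ ^ t := by
        rw [add_sub_assoc, rpow_add_of_nonneg (norm_nonneg x) hβ (by linarith)]
        ring

theorem norm_rpow_smul_sub_rpow_smul_le_holder {β t : ℝ} (hβ : 0 ≤ β) (ht0 : 0 ≤ t)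
    (ht1 : t ≤ 1) (x y : E) :
    ‖‖x‖ ^ β • x - ‖y‖ ^ β • y‖ ≤ (β + 2) * max ‖x‖ ‖y‖ ^ (β + 1 - t) * ‖x - y‖ ^ t := by
  rcases le_total ‖y‖ ‖x‖ with hyx | hxy
  · rw [max_eq_left hyx]
    exact norm_rpow_smul_sub_rpow_smul_le_holder_of_norm_le hβ ht0 ht1 hyx
  · rw [max_eq_right hxy, norm_sub_rev, norm_sub_rev x]
    exact norm_rpow_smul_sub_rpow_smul_le_holder_of_norm_le hβ ht0 ht1 hxy

end NormedSpace

theorem gradient_norm_rpow {F : Type*} [NormedAddCommGroup F] [InnerProductSpace ℝ F]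
    [CompleteSpace F] {p : ℝ} (hp : 1 < p) (x : F) :
    gradient (fun z : F => ‖z‖ ^ p) x = (p * ‖x‖ ^ (p - 2)) • x := by
  refine HasGradientAt.gradient ?_
  have hdual : InnerProductSpace.toDual ℝ F ((p * ‖x‖ ^ (p - 2)) • x) =
      (p * ‖x‖ ^ (p - 2)) • innerSL ℝ x := by
    rw [map_smul]
    rfl
  rw [hasGradientAt_iff_hasFDerivAt, hdual]
  exact hasFDerivAt_norm_rpow x hp

theorem norm_rpow_locally_smooth_general
    (d n : ℕ) (hn : 2 ≤ n) (α : ℝ)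
    (hα1 : (n : ℝ) < α) (hα2 : α ≤ (n : ℝ) + 1) :
    ∀ x y : EuclideanSpace ℝ (Fin d),
      ‖gradient (fun z : EuclideanSpace ℝ (Fin d) => ‖z‖ ^ α) x -
        gradient (fun z : EuclideanSpace ℝ (Fin d) => ‖z‖ ^ α) y‖ ≤
      ((n : ℝ) + 5) * α * ‖x - y‖ ^ ((α - 1) / n) *
        (1 + ‖x‖ ^ (((n : ℝ) - 1) * (α - 1) / n) + ‖y‖ ^ (((n : ℝ) - 1) * (α - 1) / n)) := by
  intro x y
  have hn2 : (2 : ℝ) ≤ n := by exact_mod_cast hn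
  have hα : 0 < α := by linarith
  have ht0 : 0 ≤ (α - 1) / n := div_nonneg (by linarith) (by positivity)
  have ht1 : (α - 1) / n ≤ 1 := by rw [div_le_one (by positivity)]; linarith
  have hexp : ((n : ℝ) - 1) * (α - 1) / n = (α - 2) + 1 - (α - 1) / n := by
    field_simp
    ring
  have hholder := norm_rpow_smul_sub_rpow_smul_le_holder (by linarith : 0 ≤ α - 2) ht0 ht1 x y
  rw [sub_add_cancel, ← hexp] at hholder
  have hmax := max_rpow_le_one_add_rpow_add_rpow (norm_nonneg x) (norm_nonneg y)
    (((n : ℝ) - 1) * (α - 1) / n)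
  rw [gradient_norm_rpow (by linarith) x, gradient_norm_rpow (by linarith) y, mul_smul, mul_smul,
    ← smul_sub, norm_smul, Real.norm_of_nonneg hα.le]
  calc α * ‖‖x‖ ^ (α - 2) • x - ‖y‖ ^ (α - 2) • y‖
      ≤ α * (α * max ‖x‖ ‖y‖ ^ (((n : ℝ) - 1) * (α - 1) / n) * ‖x - y‖ ^ ((α - 1) / n)) :=
        mul_le_mul_of_nonneg_left hholder hα.le
    _ = α * α * ‖x - y‖ ^ ((α - 1) / n) * max ‖x‖ ‖y‖ ^ (((n : ℝ) - 1) * (α - 1) / n) := by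
        ring
    _ ≤ ((n : ℝ) + 5) * α * ‖x - y‖ ^ ((α - 1) / n) *
        (1 + ‖x‖ ^ (((n : ℝ) - 1) * (α - 1) / n) + ‖y‖ ^ (((n : ℝ) - 1) * (α - 1) / n)) := by
        gcongr
        linarith

/-- `f(x) = ‖x‖^α` is `(α-1)/n`-locally smooth for `n < α ≤ n+1`,
`n ≥ 2`. -/
theorem norm_rpow_locally_smooth
    (d n : ℕ) (hd : 0 < d) (hn : 2 ≤ n) (α : ℝ)
    (hα1 : (n : ℝ) < α) (hα2 : α ≤ (n : ℝ) + 1) :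
    ∀ x y : EuclideanSpace ℝ (Fin d),
      ‖gradient (fun z : EuclideanSpace ℝ (Fin d) => ‖z‖ ^ α) x -
        gradient (fun z : EuclideanSpace ℝ (Fin d) => ‖z‖ ^ α) y‖ ≤
      ((n : ℝ) + 5) * α * ‖x - y‖ ^ ((α - 1) / n) *
        (1 + ‖x‖ ^ (((n : ℝ) - 1) * (α - 1) / n) + ‖y‖ ^ (((n : ℝ) - 1) * (α - 1) / n)) :=
  norm_rpow_locally_smooth_general d n hn α hα1 hα2
end

section
/- Suppose U : ℝ^d → ℝ is differentiable and satisfies ⟨∇U(x), x⟩ ≥ a‖x‖^β − b for all x (β-dissipativity with a, b > 0, β > 0), and that ‖∇U(x) − ∇U(y)‖ ≤ ∑_i L_i ‖x−y‖^{α_i} with ∇U(0)=0 and all α_i ≤ 1, L_i ≤ L. Then for all x ∈ ℝ^d, U(x) ≥ (a/(2β)) ‖x‖^β + U(0) − (L/(α₁+1)) ∑_i R^{α_i+1} − b/β, where R = (2b/a)^{1/β}. -/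
/-!
Follow `U` along the ray `t ↦ t • x`, whose derivative is `⟪∇U(t • x), x⟫`; each estimate
below compares `U(t • x)` with an explicit `g t` by showing that `U(t • x) - g t` is monotone.
On the ball of radius `R`, `∇U 0 = 0` and the Hölder-type bound give
`‖∇U y‖ ≤ ∑ Lᵢ ‖y‖ ^ αᵢ`, so `U` drops by at most `∑ Lᵢ ‖y‖ ^ (αᵢ + 1) / (αᵢ + 1)`.
Outside it, `a ‖y‖ ^ β ≥ 2b` turns dissipativity into `⟪∇U y, y⟫ ≥ (a / 2) ‖y‖ ^ β`, so from the
sphere of radius `R` out to `x` the potential grows by at least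
`a / (2β) (‖x‖ ^ β - R ^ β) = a / (2β) ‖x‖ ^ β - b / β`.
-/

open Real Set

section Ray

variable {E : Type*} [NormedAddCommGroup E] [InnerProductSpace ℝ E] [CompleteSpace E]
  {U : E → ℝ}

theorem hasDerivAt_comp_smul_const (hU : Differentiable ℝ U) (x : E) (t : ℝ) :
    HasDerivAt (fun s : ℝ => U (s • x)) (inner ℝ (gradient U (t • x)) x) t := by
  have hline : HasDerivAt (fun s : ℝ => s • x) x t := by
    simpa using (hasDerivAt_id t).smul_const x
  have h := (hU (t • x)).hasGradientAt.hasFDerivAt.comp_hasDerivAt t hline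
  rwa [InnerProductSpace.toDual_apply_apply] at h

theorem sub_le_comp_smul_sub_of_deriv_le_inner (hU : Differentiable ℝ U) (x : E)
    {g g' : ℝ → ℝ} {t₁ t₂ : ℝ} (ht : t₁ ≤ t₂) (hg : ContinuousOn g (Icc t₁ t₂))
    (hg' : ∀ t ∈ Ioo t₁ t₂, HasDerivAt g (g' t) t)
    (hle : ∀ t ∈ Ioo t₁ t₂, g' t ≤ inner ℝ (gradient U (t • x)) x) :
    g t₂ - g t₁ ≤ U (t₂ • x) - U (t₁ • x) := by
  have hmono : MonotoneOn (fun t => U (t • x) - g t) (Icc t₁ t₂) := by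
    refine monotoneOn_of_hasDerivWithinAt_nonneg
      (f' := fun t => inner ℝ (gradient U (t • x)) x - g' t) (convex_Icc t₁ t₂)
      ((hU.continuous.comp (continuous_id.smul continuous_const)).continuousOn.sub hg)
      (fun t ht => ?_) (fun t ht => ?_)
    · rw [interior_Icc] at ht
      exact ((hasDerivAt_comp_smul_const hU x t).sub (hg' t ht)).hasDerivWithinAt
    · rw [interior_Icc] at ht
      exact sub_nonneg.2 (hle t ht)
  have := hmono (left_mem_Icc.2 ht) (right_mem_Icc.2 ht) ht
  linarith

theorem sub_sum_le_of_norm_gradient_le {ι : Type*} (s : Finset ι) {L α : ι → ℝ}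
    (hU : Differentiable ℝ U) (hα : ∀ i ∈ s, -1 < α i)
    (hgrad : ∀ y, ‖gradient U y‖ ≤ ∑ i ∈ s, L i * ‖y‖ ^ α i) (y : E) :
    U 0 - ∑ i ∈ s, L i * ‖y‖ ^ (α i + 1) / (α i + 1) ≤ U y := by
  set c : ι → ℝ := fun i => L i * ‖y‖ ^ (α i + 1) / (α i + 1)
  have hne : ∀ i ∈ s, α i + 1 ≠ 0 := fun i hi => by linarith [hα i hi]
  have key := sub_le_comp_smul_sub_of_deriv_le_inner hU y zero_le_one
    (g := fun t => -∑ i ∈ s, c i * t ^ (α i + 1))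
    (g' := fun t => -∑ i ∈ s, L i * (t * ‖y‖) ^ α i * ‖y‖) ?_ ?_ ?_
  · have h0 : ∀ i ∈ s, c i * (0 : ℝ) ^ (α i + 1) = 0 := fun i hi => by
      rw [zero_rpow (hne i hi), mul_zero]
    simp only [one_rpow, mul_one, one_smul, zero_smul, Finset.sum_eq_zero h0, neg_zero] at key
    linarith
  · refine (continuousOn_finsetSum s fun i hi => ?_).neg
    exact continuousOn_const.mul
      (continuousOn_id.rpow_const fun _ _ => Or.inr (by linarith [hα i hi]))
  · intro t ht
    have hder : ∀ i ∈ s, HasDerivAt (fun t => c i * t ^ (α i + 1))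
        (L i * (t * ‖y‖) ^ α i * ‖y‖) t := by
      intro i hi
      refine ((hasDerivAt_rpow_const (p := α i + 1) (Or.inl ht.1.ne')).const_mul
        (c i)).congr_deriv ?_
      simp only [c]
      rw [mul_rpow ht.1.le (norm_nonneg y), rpow_add_one' (norm_nonneg y) (hne i hi),
        add_sub_cancel_right]
      field_simp [hne i hi]
    exact (HasDerivAt.fun_sum hder).neg
  · intro t ht
    have hnorm : ‖t • y‖ = t * ‖y‖ := by rw [norm_smul, norm_of_nonneg ht.1.le]
    calc -∑ i ∈ s, L i * (t * ‖y‖) ^ α i * ‖y‖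
        ≤ -(‖gradient U (t • y)‖ * ‖y‖) := by
          rw [← Finset.sum_mul, ← hnorm]
          exact neg_le_neg (mul_le_mul_of_nonneg_right (hgrad _) (norm_nonneg y))
      _ ≤ inner ℝ (gradient U (t • y)) y :=
          neg_le_of_abs_le (abs_real_inner_le_norm _ _)

theorem sub_rpow_le_sub_of_inner_gradient_ge {c β r : ℝ} (hU : Differentiable ℝ U) (hβ : β ≠ 0)
    (hr : 0 < r) (hfar : ∀ y : E, r ≤ ‖y‖ → c * ‖y‖ ^ β ≤ inner ℝ (gradient U y) y)
    {x : E} (hx : r ≤ ‖x‖) :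
    c / β * (‖x‖ ^ β - r ^ β) ≤ U x - U ((r / ‖x‖) • x) := by
  have hxpos : 0 < ‖x‖ := hr.trans_le hx
  have ht₀ : 0 < r / ‖x‖ := div_pos hr hxpos
  have hder : ∀ t ∈ Ioo (r / ‖x‖) 1,
      HasDerivAt (fun t => c / β * ‖x‖ ^ β * t ^ β) (c * ‖x‖ ^ β * t ^ (β - 1)) t :=
    fun t ht => ((hasDerivAt_rpow_const (Or.inl (ht₀.trans ht.1).ne')).const_mul _).congr_deriv
      (by field_simp)
  have key := sub_le_comp_smul_sub_of_deriv_le_inner hU x ((div_le_one hxpos).2 hx)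
    (g := fun t => c / β * ‖x‖ ^ β * t ^ β) (continuousOn_const.mul
      (continuousOn_id.rpow_const fun t ht => Or.inl (ht₀.trans_le ht.1).ne')) hder ?_
  · rw [one_smul, one_rpow, div_rpow hr.le hxpos.le] at key
    have hxβ : ‖x‖ ^ β ≠ 0 := (rpow_pos_of_pos hxpos β).ne'
    convert key using 1
    field_simp
  · intro t ht
    have htpos : 0 < t := ht₀.trans ht.1
    have hnorm : ‖t • x‖ = t * ‖x‖ := by rw [norm_smul, norm_of_nonneg htpos.le]
    have hrt : r ≤ ‖t • x‖ := by
      rw [hnorm, ← div_le_iff₀ hxpos]; exact ht.1.le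
    have h := hfar _ hrt
    rw [hnorm, real_inner_smul_right, mul_rpow htpos.le hxpos.le] at h
    rw [rpow_sub_one htpos.ne', ← mul_div_assoc, div_le_iff₀' htpos]
    linarith

end Ray

theorem sum_mul_rpow_div_le {ι : Type*} (s : Finset ι) {L α : ι → ℝ} {Lmax α₀ ρ R : ℝ}
    (hα₀ : -1 < α₀) (hα : ∀ i ∈ s, α₀ ≤ α i) (hL : ∀ i ∈ s, 0 ≤ L i) (hLmax : ∀ i ∈ s, L i ≤ Lmax)
    (hρ : 0 ≤ ρ) (hρR : ρ ≤ R) :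
    ∑ i ∈ s, L i * ρ ^ (α i + 1) / (α i + 1) ≤ Lmax / (α₀ + 1) * ∑ i ∈ s, R ^ (α i + 1) := by
  rw [Finset.mul_sum]
  refine Finset.sum_le_sum fun i hi => ?_
  have hp : 0 < α i + 1 := by linarith [hα i hi]
  have hLmax₀ : 0 ≤ Lmax := (hL i hi).trans (hLmax i hi)
  rw [div_mul_eq_mul_div]
  exact div_le_div₀ (mul_nonneg hLmax₀ (rpow_nonneg (hρ.trans hρR) _))
    (mul_le_mul (hLmax i hi) (rpow_le_rpow hρ hρR hp.le) (rpow_nonneg hρ _) hLmax₀)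
    (by linarith) (by linarith [hα i hi])

theorem half_mul_rpow_le_mul_rpow_sub {a b β r s : ℝ} (ha : 0 ≤ a) (hβ : 0 ≤ β) (hr : 0 ≤ r)
    (hrβ : 2 * b ≤ a * r ^ β) (hrs : r ≤ s) :
    a / 2 * s ^ β ≤ a * s ^ β - b := by
  have := mul_le_mul_of_nonneg_left (rpow_le_rpow hr hrs hβ) ha
  linarith

theorem dissipative_potential_lower_bound_general
    (d N : ℕ) (hN : 0 < N)
    (U : EuclideanSpace ℝ (Fin d) → ℝ) (hU : ContDiff ℝ 1 U)
    (a b β : ℝ) (ha : 0 < a) (hb : 0 < b) (hβ : 0 < β)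
    (hdiss : ∀ x, (inner ℝ (gradient U x) x : ℝ) ≥ a * ‖x‖ ^ β - b)
    (α : Fin N → ℝ) (hα0 : ∀ i, 0 < α i) (hαmono : Monotone α)
    (L : Fin N → ℝ) (Lmax : ℝ) (hLpos : ∀ i, 0 < L i) (hLle : ∀ i, L i ≤ Lmax)
    (hsmooth : ∀ x y, ‖gradient U x - gradient U y‖ ≤ ∑ i, L i * ‖x - y‖ ^ (α i))
    (hstat : gradient U 0 = 0) :
    ∀ x, U x ≥ a / (2 * β) * ‖x‖ ^ β + U 0 -
      (Lmax / (α ⟨0, hN⟩ + 1)) * (∑ i, ((2 * b / a) ^ (1 / β)) ^ (α i + 1)) - b / β := by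
  intro x
  have hUd : Differentiable ℝ U := hU.differentiable one_ne_zero
  set R := (2 * b / a) ^ (1 / β) with hRdef
  have hR : 0 < R := rpow_pos_of_pos (by positivity) _
  have hRβ : R ^ β = 2 * b / a := by rw [hRdef, one_div, rpow_inv_rpow (by positivity) hβ.ne']
  have hRβ' : a / (2 * β) * R ^ β = b / β := by rw [hRβ]; field_simp
  have hnear : ∀ y, ‖y‖ ≤ R →
      U 0 - Lmax / (α ⟨0, hN⟩ + 1) * ∑ i, R ^ (α i + 1) ≤ U y := fun y hy =>
    (sub_le_sub_left (sum_mul_rpow_div_le _ (by linarith [hα0 ⟨0, hN⟩])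
      (fun i _ => hαmono (Nat.zero_le i.1)) (fun i _ => (hLpos i).le) (fun i _ => hLle i)
      (norm_nonneg y) hy) _).trans
    (sub_sum_le_of_norm_gradient_le _ hUd (fun i _ => by linarith [hα0 i])
      (fun y => by simpa [hstat] using hsmooth y 0) y)
  rcases le_or_gt ‖x‖ R with hx | hx
  · have : a / (2 * β) * ‖x‖ ^ β ≤ a / (2 * β) * R ^ β :=
      mul_le_mul_of_nonneg_left (rpow_le_rpow (norm_nonneg x) hx hβ.le) (by positivity)
    linarith [hnear x hx]
  · have h2b : 2 * b ≤ a * R ^ β := by rw [hRβ, mul_div_cancel₀ _ ha.ne']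
    have hfar : ∀ y : EuclideanSpace ℝ (Fin d), R ≤ ‖y‖ →
        a / 2 * ‖y‖ ^ β ≤ inner ℝ (gradient U y) y := fun y hy =>
      (half_mul_rpow_le_mul_rpow_sub ha.le hβ.le hR.le h2b hy).trans (hdiss y)
    have houter := sub_rpow_le_sub_of_inner_gradient_ge hUd hβ.ne' hR hfar hx.le
    have hinner := hnear ((R / ‖x‖) • x) (by
      rw [norm_smul, norm_div, norm_norm, norm_of_nonneg hR.le,
        div_mul_cancel₀ _ (hR.trans hx).ne'])
    rw [div_div, mul_sub] at houter
    linarith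

/-- a lower bound on the potential under β-dissipativity and
α-mixture weak smoothness, with `R = (2b/a)^(1/β)`. -/
theorem dissipative_potential_lower_bound
    (d N : ℕ) (hd : 0 < d) (hN : 0 < N)
    (U : EuclideanSpace ℝ (Fin d) → ℝ) (hU : ContDiff ℝ 1 U)
    (a b β : ℝ) (ha : 0 < a) (hb : 0 < b) (hβ : 0 < β)
    (hdiss : ∀ x, (inner ℝ (gradient U x) x : ℝ) ≥ a * ‖x‖ ^ β - b)
    (α : Fin N → ℝ) (hα0 : ∀ i, 0 < α i) (hα1 : ∀ i, α i ≤ 1) (hαmono : Monotone α)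
    (L : Fin N → ℝ) (Lmax : ℝ) (hLpos : ∀ i, 0 < L i) (hLle : ∀ i, L i ≤ Lmax)
    (hsmooth : ∀ x y, ‖gradient U x - gradient U y‖ ≤ ∑ i, L i * ‖x - y‖ ^ (α i))
    (hstat : gradient U 0 = 0) :
    ∀ x, U x ≥ a / (2 * β) * ‖x‖ ^ β + U 0 -
      (Lmax / (α ⟨0, hN⟩ + 1)) * (∑ i, ((2 * b / a) ^ (1 / β)) ^ (α i + 1)) - b / β :=
  dissipative_potential_lower_bound_general d N hN U hU a b β ha hb hβ hdiss α hα0 hαmono L Lmax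
    hLpos hLle hsmooth hstat
end

section
/- (Wasserstein–Fisher bound under Poincaré) Let ν satisfy a Poincaré inequality with constant γ > 0 and let μ ≪ ν have smooth density. Then for any q ≥ 1, W_q(μ, ν) ≤ 2 M_{2q}(μ+ν)^{1/(2q)} γ^{−1/(2q)} I(μ|ν)^{1/(2q)}, where M_s(g) = ∫ g(x)(1+‖x‖²)^{s/2} dx and W_q is the L_q-Wasserstein distance. -/
/-!
Couple `μ` and `ν` by leaving their common part `min μ ν` on the diagonal and sending the excess
`(μ - ν)₊` onto `(ν - μ)₊` independently. Since `‖x - y‖^q ≤ 2^(q-1) (‖x‖^q + ‖y‖^q)`, this gives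
`W_q^q ≤ 2^(q-1) ∫ ‖x‖^q |μ - ν|`. Writing `|μ - ν| = (√μ + √ν) |√μ - √ν|` and using
`(√μ + √ν)² ≤ 2 (μ + ν)`, Cauchy–Schwarz bounds this integral by `√(2 M_{2q}(μ+ν))` times the
Hellinger distance `√(∫ (√μ - √ν)²)`, and `∫ (√μ - √ν)² = 2 - 2 ∫ √(μν)`. Finally, the Poincaré
inequality for `g = √(μ/ν)`, for which `∫ ν g² = 1`, `∫ ν g = ∫ √(μν)` and
`∫ ν ‖∇g‖² = I(μ|ν) / 4`, gives `1 - (∫ √(μν))² ≤ I(μ|ν) / (4γ)`, hence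
`∫ (√μ - √ν)² ≤ I(μ|ν) / (2γ)`.
-/

open MeasureTheory Real

/-- The `L_q`-Wasserstein distance, defined as an infimum over couplings. -/
noncomputable def wassersteinDist (d : ℕ) (q : ℝ)
    (μ ν : Measure (EuclideanSpace ℝ (Fin d))) : ℝ :=
  sInf { r : ℝ |
    ∃ cpl : Measure (EuclideanSpace ℝ (Fin d) × EuclideanSpace ℝ (Fin d)),
      cpl.map Prod.fst = μ ∧ cpl.map Prod.snd = ν ∧
      r = (∫ z, ‖z.1 - z.2‖ ^ q ∂cpl) ^ (1 / q) }

open scoped ENNReal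
lemma ENNReal.ofReal_min_add_ofReal_sub {a b : ℝ} (hb : 0 ≤ b) :
    ENNReal.ofReal (min a b) + ENNReal.ofReal (a - b) = ENNReal.ofReal a := by
  rcases le_total a b with h | h
  · simp [min_eq_left h, ENNReal.ofReal_of_nonpos (sub_nonpos.mpr h)]
  · rw [min_eq_right h, ← ENNReal.ofReal_add hb (sub_nonneg.mpr h), add_sub_cancel]

lemma ENNReal.ofReal_sub_add_ofReal_sub (a b : ℝ) :
    ENNReal.ofReal (a - b) + ENNReal.ofReal (b - a) = ENNReal.ofReal |a - b| := by
  rcases le_total a b with h | h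
  · simp [ENNReal.ofReal_of_nonpos (sub_nonpos.mpr h), abs_sub_comm a b,
      abs_of_nonneg (sub_nonneg.mpr h)]
  · simp [ENNReal.ofReal_of_nonpos (sub_nonpos.mpr h), abs_of_nonneg (sub_nonneg.mpr h)]

lemma enorm_sub_rpow_le {E : Type*} [SeminormedAddGroup E] (x y : E) {q : ℝ} (hq : 1 ≤ q) :
    ‖x - y‖ₑ ^ q ≤ 2 ^ (q - 1) * (‖x‖ₑ ^ q + ‖y‖ₑ ^ q) :=
  (ENNReal.rpow_le_rpow enorm_sub_le (by linarith)).trans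
    (ENNReal.rpow_add_le_mul_rpow_add_rpow _ _ hq)

lemma lintegral_ofReal_sub_eq_of_integral_eq {Ω : Type*} [MeasurableSpace Ω] {ρ : Measure Ω}
    {f g : Ω → ℝ} (hf : Integrable f ρ) (hg : Integrable g ρ)
    (h : ∫ x, f x ∂ρ = ∫ x, g x ∂ρ) :
    ∫⁻ x, ENNReal.ofReal (f x - g x) ∂ρ = ∫⁻ x, ENNReal.ofReal (g x - f x) ∂ρ := by
  have hdiff := integral_eq_lintegral_pos_part_sub_lintegral_neg_part (hf.sub hg)
  simp only [Pi.sub_apply, neg_sub] at hdiff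
  rw [integral_sub hf hg, h, sub_self, eq_comm, sub_eq_zero] at hdiff
  exact (ENNReal.toReal_eq_toReal_iff' (hf.sub hg).lintegral_lt_top.ne
    (hg.sub hf).lintegral_lt_top.ne).mp hdiff

section Coupling

variable {X : Type*} [MeasurableSpace X]

-- If `α = 0` the scalar `(α univ)⁻¹` is `⊤`, but it multiplies the zero measure.
noncomputable def commonPartCoupling (κ α β : Measure X) : Measure (X × X) :=
  κ.map (fun x => (x, x)) + (α Set.univ)⁻¹ • α.prod β

variable (κ : Measure X) {α β : Measure X} [IsFiniteMeasure β]

lemma commonPartCoupling_map_fst [IsFiniteMeasure α] (h : α Set.univ = β Set.univ) :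
    (commonPartCoupling κ α β).map Prod.fst = κ + α := by
  rw [commonPartCoupling, Measure.map_add _ _ measurable_fst, Measure.map_smul,
    Measure.map_map measurable_fst (by fun_prop : Measurable fun x : X => (x, x)),
    Function.comp_def, Measure.map_id', Measure.map_fst_prod, smul_smul, ← h]
  rcases eq_or_ne (α Set.univ) 0 with h0 | h0
  · simp [Measure.measure_univ_eq_zero.mp h0]
  · rw [ENNReal.inv_mul_cancel h0 (measure_ne_top _ _), one_smul]

lemma commonPartCoupling_map_snd [IsFiniteMeasure α] (h : α Set.univ = β Set.univ) :
    (commonPartCoupling κ α β).map Prod.snd = κ + β := by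
  rw [commonPartCoupling, Measure.map_add _ _ measurable_snd, Measure.map_smul,
    Measure.map_map measurable_snd (by fun_prop : Measurable fun x : X => (x, x)),
    Function.comp_def, Measure.map_id', Measure.map_snd_prod, smul_smul]
  rcases eq_or_ne (α Set.univ) 0 with h0 | h0
  · simp [Measure.measure_univ_eq_zero.mp h0, Measure.measure_univ_eq_zero.mp (h ▸ h0)]
  · rw [ENNReal.inv_mul_cancel h0 (measure_ne_top _ _), one_smul]

lemma lintegral_commonPartCoupling_le {c : X × X → ℝ≥0∞} {a b : X → ℝ≥0∞}
    (hc_diag : ∀ x, c (x, x) = 0) (hc : ∀ x y, c (x, y) ≤ a x + b y)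
    (h : α Set.univ = β Set.univ) :
    ∫⁻ z, c z ∂commonPartCoupling κ α β ≤ ∫⁻ x, a x ∂α + ∫⁻ y, b y ∂β := by
  have hprod : ∫⁻ z, c z ∂α.prod β ≤ α Set.univ * (∫⁻ x, a x ∂α + ∫⁻ y, b y ∂β) :=
    calc ∫⁻ z, c z ∂α.prod β ≤ ∫⁻ x, ∫⁻ y, a x + b y ∂β ∂α :=
          (lintegral_prod_le _).trans (lintegral_mono fun x => lintegral_mono (hc x))
      _ = ∫⁻ x, a x * β Set.univ + ∫⁻ y, b y ∂β ∂α := by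
          simp_rw [lintegral_add_left' aemeasurable_const, lintegral_const]
      _ = α Set.univ * (∫⁻ x, a x ∂α + ∫⁻ y, b y ∂β) := by
          rw [lintegral_add_right _ measurable_const, lintegral_mul_const' _ _ (measure_ne_top _ _),
            lintegral_const, ← h]
          ring
  calc ∫⁻ z, c z ∂commonPartCoupling κ α β
      ≤ ∫⁻ x, c (x, x) ∂κ + (α Set.univ)⁻¹ * ∫⁻ z, c z ∂α.prod β := by
        rw [commonPartCoupling, lintegral_add_measure, lintegral_smul_measure, smul_eq_mul]
        gcongr
        exact lintegral_map_le _ _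
    _ ≤ (α Set.univ)⁻¹ * α Set.univ * (∫⁻ x, a x ∂α + ∫⁻ y, b y ∂β) := by
        simp only [hc_diag, lintegral_zero, zero_add, mul_assoc]
        gcongr
    _ ≤ ∫⁻ x, a x ∂α + ∫⁻ y, b y ∂β :=
        mul_le_of_le_one_left (zero_le) (ENNReal.inv_mul_le_one _)

end Coupling

section Wasserstein

variable {d : ℕ} {q : ℝ}

lemma wassersteinDist_le_of_coupling {μ ν : Measure (EuclideanSpace ℝ (Fin d))}
    (cpl : Measure (EuclideanSpace ℝ (Fin d) × EuclideanSpace ℝ (Fin d)))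
    (h_fst : cpl.map Prod.fst = μ) (h_snd : cpl.map Prod.snd = ν) (hq : 0 ≤ q) {C : ℝ}
    (hC : 0 ≤ C) (hcost : ∫⁻ z, ‖z.1 - z.2‖ₑ ^ q ∂cpl ≤ ENNReal.ofReal C) :
    wassersteinDist d q μ ν ≤ C ^ (1 / q) := by
  have hcost_nonneg : ∀ cpl : Measure (EuclideanSpace ℝ (Fin d) × EuclideanSpace ℝ (Fin d)),
      0 ≤ ∫ z, ‖z.1 - z.2‖ ^ q ∂cpl := fun _ => integral_nonneg fun _ => by positivity
  unfold wassersteinDist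
  refine le_trans (csInf_le ⟨0, ?_⟩ ⟨cpl, h_fst, h_snd, rfl⟩)
    (rpow_le_rpow (hcost_nonneg cpl) ?_ (by positivity))
  · rintro _ ⟨cpl', -, -, rfl⟩
    exact rpow_nonneg (hcost_nonneg cpl') _
  rw [integral_eq_lintegral_of_nonneg_ae (ae_of_all _ fun _ => by positivity)
    (by fun_prop)]
  refine ENNReal.toReal_le_of_le_ofReal hC (le_of_eq_of_le ?_ hcost)
  simp_rw [← ofReal_norm, ENNReal.ofReal_rpow_of_nonneg (norm_nonneg _) hq]

lemma wassersteinDist_withDensity_le (hq : 1 ≤ q) {mu nu : EuclideanSpace ℝ (Fin d) → ℝ}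
    (hmu_meas : Measurable mu) (hnu_meas : Measurable nu)
    (hmu_nonneg : ∀ x, 0 ≤ mu x) (hnu_nonneg : ∀ x, 0 ≤ nu x)
    (hmu : Integrable mu) (hnu : Integrable nu) (hmass : ∫ x, mu x = ∫ x, nu x)
    (hmoment : Integrable fun x => ‖x‖ ^ q * |mu x - nu x|) :
    wassersteinDist d q (volume.withDensity fun x => ENNReal.ofReal (mu x))
        (volume.withDensity fun x => ENNReal.ofReal (nu x)) ≤
      (2 ^ (q - 1) * ∫ x, ‖x‖ ^ q * |mu x - nu x|) ^ (1 / q) := by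
  set κ := volume.withDensity fun x => ENNReal.ofReal (min (mu x) (nu x))
  set α := volume.withDensity fun x => ENNReal.ofReal (mu x - nu x)
  set β := volume.withDensity fun x => ENNReal.ofReal (nu x - mu x)
  have hμ : (volume.withDensity fun x => ENNReal.ofReal (mu x)) = κ + α := by
    rw [← withDensity_add_left (by fun_prop)]
    congr 1 with x
    exact (ENNReal.ofReal_min_add_ofReal_sub (hnu_nonneg x)).symm
  have hν : (volume.withDensity fun x => ENNReal.ofReal (nu x)) = κ + β := by
    rw [← withDensity_add_left (by fun_prop)]
    congr 1 with x
    rw [Pi.add_apply, min_comm, ENNReal.ofReal_min_add_ofReal_sub (hmu_nonneg x)]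
  have : IsFiniteMeasure α := isFiniteMeasure_withDensity_ofReal (hmu.sub hnu).2
  have : IsFiniteMeasure β := isFiniteMeasure_withDensity_ofReal (hnu.sub hmu).2
  have hαβ : α Set.univ = β Set.univ := by
    simp only [α, β, withDensity_apply _ MeasurableSet.univ, setLIntegral_univ]
    exact lintegral_ofReal_sub_eq_of_integral_eq hmu hnu hmass
  refine wassersteinDist_le_of_coupling (commonPartCoupling κ α β)
    (hμ ▸ commonPartCoupling_map_fst κ hαβ) (hν ▸ commonPartCoupling_map_snd κ hαβ)
    (by linarith) (by positivity) ?_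
  calc ∫⁻ z, ‖z.1 - z.2‖ₑ ^ q ∂commonPartCoupling κ α β
      ≤ ∫⁻ x, 2 ^ (q - 1) * ‖x‖ₑ ^ q ∂α + ∫⁻ y, 2 ^ (q - 1) * ‖y‖ₑ ^ q ∂β := by
        refine lintegral_commonPartCoupling_le κ (fun x => ?_)
          (fun x y => (enorm_sub_rpow_le x y hq).trans_eq (mul_add _ _ _)) hαβ
        simp [ENNReal.zero_rpow_of_pos (by linarith : 0 < q)]
    _ = ∫⁻ x, ENNReal.ofReal |mu x - nu x| * (2 ^ (q - 1) * ‖x‖ₑ ^ q) := by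
        rw [← lintegral_add_measure, ← withDensity_add_left (by fun_prop),
          lintegral_withDensity_eq_lintegral_mul _ (by fun_prop) (by fun_prop)]
        congr 1 with x
        rw [Pi.mul_apply, Pi.add_apply, ENNReal.ofReal_sub_add_ofReal_sub]
    _ = ENNReal.ofReal (2 ^ (q - 1) * ∫ x, ‖x‖ ^ q * |mu x - nu x|) := by
        rw [ENNReal.ofReal_mul (by positivity),
          ofReal_integral_eq_lintegral_ofReal hmoment (ae_of_all _ fun _ => by positivity),
          ← lintegral_const_mul' _ _ ENNReal.ofReal_ne_top]
        congr 1 with x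
        rw [ENNReal.ofReal_mul (by positivity), ← ofReal_norm,
          ENNReal.ofReal_rpow_of_nonneg (norm_nonneg _) (by linarith),
          ← ENNReal.ofReal_rpow_of_pos two_pos, ENNReal.ofReal_ofNat]
        ring

end Wasserstein

lemma abs_sub_eq_sqrt_add_mul_abs_sqrt_sub {a b : ℝ} (ha : 0 ≤ a) (hb : 0 ≤ b) :
    |a - b| = (√a + √b) * |√a - √b| :=
  calc |a - b| = |(√a + √b) * (√a - √b)| := by rw [← sq_sub_sq, sq_sqrt ha, sq_sqrt hb]
    _ = (√a + √b) * |√a - √b| := by rw [abs_mul, abs_of_nonneg (by positivity)]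

lemma sq_mul_sqrt_add_sqrt_le (w : ℝ) {a b : ℝ} (ha : 0 ≤ a) (hb : 0 ≤ b) :
    (w * (√a + √b)) ^ 2 ≤ 2 * (w ^ 2 * (a + b)) := by
  have := sq_sqrt ha; have := sq_sqrt hb
  nlinarith [mul_nonneg (sq_nonneg w) (sq_nonneg (√a - √b))]

section CauchySchwarz

variable {Ω : Type*} [MeasurableSpace Ω] {ρ : Measure Ω} {f g : Ω → ℝ}

lemma integrable_sqrt_mul (hf_nonneg : ∀ x, 0 ≤ f x) (hg_nonneg : ∀ x, 0 ≤ g x)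
    (hf : Integrable f ρ) (hg : Integrable g ρ) :
    Integrable (fun x => √(f x * g x)) ρ := by
  refine (hf.add hg).mono' (by fun_prop) (ae_of_all _ fun x => ?_)
  rw [norm_of_nonneg (sqrt_nonneg _), Pi.add_apply, sqrt_mul (hf_nonneg x)]
  nlinarith [sq_sqrt (hf_nonneg x), sq_sqrt (hg_nonneg x), sqrt_nonneg (f x), sqrt_nonneg (g x)]

lemma integral_sqrt_sub_sqrt_sq (hf_nonneg : ∀ x, 0 ≤ f x) (hg_nonneg : ∀ x, 0 ≤ g x)
    (hf : Integrable f ρ) (hg : Integrable g ρ) :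
    ∫ x, (√(f x) - √(g x)) ^ 2 ∂ρ = ∫ x, f x ∂ρ + ∫ x, g x ∂ρ - 2 * ∫ x, √(f x * g x) ∂ρ := by
  have hpoint : ∀ x, (√(f x) - √(g x)) ^ 2 = f x + g x - 2 * √(f x * g x) := fun x => by
    rw [sub_sq, sq_sqrt (hf_nonneg x), sq_sqrt (hg_nonneg x), sqrt_mul (hf_nonneg x)]
    ring
  simp_rw [hpoint]
  rw [integral_sub (f := fun x => f x + g x) (hf.add hg)
    ((integrable_sqrt_mul hf_nonneg hg_nonneg hf hg).const_mul 2), integral_add hf hg,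
    integral_const_mul]

lemma memLp_abs_sqrt_sub_sqrt (hf_nonneg : ∀ x, 0 ≤ f x) (hg_nonneg : ∀ x, 0 ≤ g x)
    (hf : Integrable f ρ) (hg : Integrable g ρ) :
    MemLp (fun x => |√(f x) - √(g x)|) 2 ρ :=
  (memLp_two_iff_integrable_sq (by fun_prop)).mpr <|
    (hf.add hg).mono' (by fun_prop) (ae_of_all _ fun x => by
      rw [norm_of_nonneg (sq_nonneg _), sq_abs, Pi.add_apply]
      nlinarith [sq_sqrt (hf_nonneg x), sq_sqrt (hg_nonneg x), sqrt_nonneg (f x),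
        sqrt_nonneg (g x)])

variable {w : Ω → ℝ}

lemma memLp_mul_sqrt_add_sqrt (hw : AEStronglyMeasurable w ρ) (hf_nonneg : ∀ x, 0 ≤ f x)
    (hg_nonneg : ∀ x, 0 ≤ g x) (hf : Integrable f ρ) (hg : Integrable g ρ)
    (hwfg : Integrable (fun x => w x ^ 2 * (f x + g x)) ρ) :
    MemLp (fun x => w x * (√(f x) + √(g x))) 2 ρ :=
  (memLp_two_iff_integrable_sq (by fun_prop)).mpr <|
    (hwfg.const_mul 2).mono' (by fun_prop) (ae_of_all _ fun x => by
      rw [norm_of_nonneg (sq_nonneg _)]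
      exact sq_mul_sqrt_add_sqrt_le _ (hf_nonneg x) (hg_nonneg x))

lemma integrable_mul_abs_sub (hw : AEStronglyMeasurable w ρ) (hf_nonneg : ∀ x, 0 ≤ f x)
    (hg_nonneg : ∀ x, 0 ≤ g x) (hf : Integrable f ρ) (hg : Integrable g ρ)
    (hwfg : Integrable (fun x => w x ^ 2 * (f x + g x)) ρ) :
    Integrable (fun x => w x * |f x - g x|) ρ := by
  simp_rw [abs_sub_eq_sqrt_add_mul_abs_sqrt_sub (hf_nonneg _) (hg_nonneg _), ← mul_assoc]
  exact (memLp_mul_sqrt_add_sqrt hw hf_nonneg hg_nonneg hf hg hwfg).integrable_mul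
    (memLp_abs_sqrt_sub_sqrt hf_nonneg hg_nonneg hf hg)

lemma integral_mul_abs_sub_le (hw : AEStronglyMeasurable w ρ) (hw_nonneg : ∀ x, 0 ≤ w x)
    (hf_nonneg : ∀ x, 0 ≤ f x) (hg_nonneg : ∀ x, 0 ≤ g x) (hf : Integrable f ρ)
    (hg : Integrable g ρ) (hwfg : Integrable (fun x => w x ^ 2 * (f x + g x)) ρ) :
    ∫ x, w x * |f x - g x| ∂ρ ≤
      √(2 * ∫ x, w x ^ 2 * (f x + g x) ∂ρ) * √(∫ x, (√(f x) - √(g x)) ^ 2 ∂ρ) := by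
  have hu := memLp_mul_sqrt_add_sqrt hw hf_nonneg hg_nonneg hf hg hwfg
  have holder := integral_mul_le_Lp_mul_Lq_of_nonneg Real.HolderConjugate.two_two
    (ae_of_all _ fun x => mul_nonneg (hw_nonneg x) (add_nonneg (sqrt_nonneg _) (sqrt_nonneg _)))
    (ae_of_all _ fun x => abs_nonneg _) (by simpa using hu)
    (by simpa using memLp_abs_sqrt_sub_sqrt hf_nonneg hg_nonneg hf hg)
  simp only [rpow_two, ← sqrt_eq_rpow, sq_abs] at holder
  calc ∫ x, w x * |f x - g x| ∂ρ
      = ∫ x, w x * (√(f x) + √(g x)) * |√(f x) - √(g x)| ∂ρ := by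
        simp_rw [abs_sub_eq_sqrt_add_mul_abs_sqrt_sub (hf_nonneg _) (hg_nonneg _), mul_assoc]
    _ ≤ _ := holder
    _ ≤ _ := by
        gcongr
        rw [← integral_const_mul]
        exact integral_mono ((memLp_two_iff_integrable_sq hu.1).mp hu) (hwfg.const_mul 2)
          fun x => sq_mul_sqrt_add_sqrt_le _ (hf_nonneg x) (hg_nonneg x)

end CauchySchwarz

lemma norm_rpow_sq_mul_le {E : Type*} [SeminormedAddGroup E] (x : E) {q : ℝ} (hq : 0 ≤ q) {a : ℝ}
    (ha : 0 ≤ a) : (‖x‖ ^ q) ^ 2 * a ≤ a * (1 + ‖x‖ ^ 2) ^ q := by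
  rw [← rpow_mul_natCast (norm_nonneg x), mul_comm q, rpow_natCast_mul (norm_nonneg x), mul_comm]
  exact mul_le_mul_of_nonneg_left (rpow_le_rpow (sq_nonneg _) (by linarith) hq) ha

section Moments

variable {E : Type*} [NormedAddCommGroup E] [MeasurableSpace E] [OpensMeasurableSpace E]
  {ρ : Measure E} {q : ℝ} {f g : E → ℝ}

lemma integrable_norm_rpow_sq_mul (hq : 0 ≤ q) {h : E → ℝ} (hh_nonneg : ∀ x, 0 ≤ h x)
    (hh : AEStronglyMeasurable h ρ) (hM : Integrable (fun x => h x * (1 + ‖x‖ ^ 2) ^ q) ρ) :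
    Integrable (fun x => (‖x‖ ^ q) ^ 2 * h x) ρ :=
  hM.mono' (by fun_prop (disch := exact hq)) (ae_of_all _ fun x => by
    rw [norm_of_nonneg (mul_nonneg (sq_nonneg _) (hh_nonneg x))]
    exact norm_rpow_sq_mul_le x hq (hh_nonneg x))

variable (hq : 0 ≤ q) (hf_nonneg : ∀ x, 0 ≤ f x) (hg_nonneg : ∀ x, 0 ≤ g x)
  (hf : Integrable f ρ) (hg : Integrable g ρ)
  (hM : Integrable (fun x => (f x + g x) * (1 + ‖x‖ ^ 2) ^ q) ρ)
include hq hf_nonneg hg_nonneg hf hg hM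

lemma integrable_norm_rpow_mul_abs_sub : Integrable (fun x => ‖x‖ ^ q * |f x - g x|) ρ :=
  integrable_mul_abs_sub (by fun_prop (disch := exact hq)) hf_nonneg hg_nonneg hf hg
    (integrable_norm_rpow_sq_mul hq (fun x => add_nonneg (hf_nonneg x) (hg_nonneg x))
      (hf.1.add hg.1) hM)

lemma integral_norm_rpow_mul_abs_sub_le :
    ∫ x, ‖x‖ ^ q * |f x - g x| ∂ρ ≤
      √(2 * ∫ x, (f x + g x) * (1 + ‖x‖ ^ 2) ^ q ∂ρ) * √(∫ x, (√(f x) - √(g x)) ^ 2 ∂ρ) := by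
  have hfg_nonneg x : 0 ≤ f x + g x := add_nonneg (hf_nonneg x) (hg_nonneg x)
  have hmoment := integrable_norm_rpow_sq_mul hq hfg_nonneg (hf.1.add hg.1) hM
  refine (integral_mul_abs_sub_le (by fun_prop (disch := exact hq)) (fun _ => by positivity)
    hf_nonneg hg_nonneg hf hg hmoment).trans ?_
  gcongr
  exact fun x => norm_rpow_sq_mul_le x hq (hfg_nonneg x)

end Moments

section Poincare

variable {E : Type*} [NormedAddCommGroup E] [InnerProductSpace ℝ E] [CompleteSpace E]

lemma norm_gradient_sqrt {r : E → ℝ} {x : E} (hr : DifferentiableAt ℝ r x) (hx : 0 < r x) :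
    ‖gradient (fun y => √(r y)) x‖ = √(r x) / 2 * ‖gradient (fun y => log (r y)) x‖ := by
  have hsqrt := (hr.hasFDerivAt.sqrt hx.ne').fderiv
  have hlog := (hr.hasFDerivAt.log hx.ne').fderiv
  simp only [gradient, hsqrt, hlog, LinearIsometryEquiv.norm_map, norm_smul, norm_div, norm_one,
    norm_inv, norm_mul, norm_of_nonneg hx.le, norm_of_nonneg (sqrt_nonneg _), Real.norm_two]
  have := sqrt_pos.mpr hx
  field_simp
  rw [sq_sqrt hx.le, mul_comm]

variable [MeasurableSpace E] {ρ : Measure E} {γ : ℝ} {mu nu : E → ℝ}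

def PoincareInequality (ρ : Measure E) (nu : E → ℝ) (γ : ℝ) : Prop :=
  ∀ g : E → ℝ, ContDiff ℝ 1 g →
    Integrable (fun x => nu x * g x ^ 2) ρ →
    Integrable (fun x => nu x * g x) ρ →
    Integrable (fun x => nu x * ‖gradient g x‖ ^ 2) ρ →
    (∫ x, nu x * g x ^ 2 ∂ρ) - (∫ x, nu x * g x ∂ρ) ^ 2 ≤
      (1 / γ) * ∫ x, nu x * ‖gradient g x‖ ^ 2 ∂ρ

lemma PoincareInequality.one_sub_sq_integral_sqrt_mul_le (hPI : PoincareInequality ρ nu γ)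
    (hmuC : ContDiff ℝ 1 mu) (hnuC : ContDiff ℝ 1 nu) (hmu_pos : ∀ x, 0 < mu x)
    (hnu_pos : ∀ x, 0 < nu x) (hmu : Integrable mu ρ) (hnu : Integrable nu ρ)
    (hmu_one : ∫ x, mu x ∂ρ = 1)
    (hFI : Integrable (fun x => mu x * ‖gradient (fun y => log (mu y / nu y)) x‖ ^ 2) ρ) :
    1 - (∫ x, √(mu x * nu x) ∂ρ) ^ 2 ≤
      1 / (4 * γ) * ∫ x, mu x * ‖gradient (fun y => log (mu y / nu y)) x‖ ^ 2 ∂ρ := by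
  have hratio_pos : ∀ x, 0 < mu x / nu x := fun x => div_pos (hmu_pos x) (hnu_pos x)
  have hratio : ContDiff ℝ 1 fun x => mu x / nu x := hmuC.div hnuC fun x => (hnu_pos x).ne'
  have h_sq : ∀ x, nu x * √(mu x / nu x) ^ 2 = mu x := fun x => by
    rw [sq_sqrt (hratio_pos x).le, mul_div_cancel₀ _ (hnu_pos x).ne']
  have h_lin : ∀ x, nu x * √(mu x / nu x) = √(mu x * nu x) := fun x => by
    rw [← sqrt_sq (hnu_pos x).le, ← sqrt_mul (sq_nonneg _), sqrt_sq (hnu_pos x).le]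
    congr 1
    field_simp [(hnu_pos x).ne']
  have h_grad : ∀ x, nu x * ‖gradient (fun y => √(mu y / nu y)) x‖ ^ 2 =
      1 / 4 * (mu x * ‖gradient (fun y => log (mu y / nu y)) x‖ ^ 2) := fun x => by
    rw [norm_gradient_sqrt ((hratio.differentiable one_ne_zero) x) (hratio_pos x), mul_pow,
      div_pow, sq_sqrt (hratio_pos x).le]
    field_simp [(hnu_pos x).ne']
    ring
  have hsqrt_int := integrable_sqrt_mul (fun x => (hmu_pos x).le) (fun x => (hnu_pos x).le) hmu hnu
  have h := hPI (fun x => √(mu x / nu x)) (hratio.sqrt fun x => (hratio_pos x).ne')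
    (by simpa only [h_sq] using hmu)
    (by simpa only [h_lin] using hsqrt_int)
    (by simpa only [h_grad] using hFI.const_mul (1 / 4))
  simp only [h_sq, h_lin, h_grad, integral_const_mul, hmu_one] at h
  convert h using 1
  ring

lemma PoincareInequality.integral_sqrt_sub_sqrt_sq_le (hPI : PoincareInequality ρ nu γ) (hγ : 0 < γ)
    (hmuC : ContDiff ℝ 1 mu) (hnuC : ContDiff ℝ 1 nu) (hmu_pos : ∀ x, 0 < mu x)
    (hnu_pos : ∀ x, 0 < nu x) (hmu_one : ∫ x, mu x ∂ρ = 1) (hnu_one : ∫ x, nu x ∂ρ = 1)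
    (hFI : Integrable (fun x => mu x * ‖gradient (fun y => log (mu y / nu y)) x‖ ^ 2) ρ) :
    ∫ x, (√(mu x) - √(nu x)) ^ 2 ∂ρ ≤
      1 / (2 * γ) * ∫ x, mu x * ‖gradient (fun y => log (mu y / nu y)) x‖ ^ 2 ∂ρ := by
  have hmu : Integrable mu ρ := .of_integral_ne_zero (by simp [hmu_one])
  have hnu : Integrable nu ρ := .of_integral_ne_zero (by simp [hnu_one])
  have hvar := hPI.one_sub_sq_integral_sqrt_mul_le hmuC hnuC hmu_pos hnu_pos hmu hnu hmu_one hFI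
  rw [integral_sqrt_sub_sqrt_sq (fun x => (hmu_pos x).le) (fun x => (hnu_pos x).le) hmu hnu,
    hmu_one, hnu_one]
  have haffinity : 0 ≤ ∫ x, √(mu x * nu x) ∂ρ := integral_nonneg fun _ => sqrt_nonneg _
  have hfisher : 0 ≤ 1 / (2 * γ) * ∫ x, mu x * ‖gradient (fun y => log (mu y / nu y)) x‖ ^ 2 ∂ρ :=
    mul_nonneg (by positivity) (integral_nonneg fun x => mul_nonneg (hmu_pos x).le (by positivity))
  rw [show 1 / (4 * γ) = 1 / (2 * γ) / 2 by ring, mul_comm_div] at hvar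
  nlinarith

end Poincare

lemma two_rpow_sub_one_mul_rpow_le {q A : ℝ} (hq : 1 ≤ q) (hA : 0 ≤ A) :
    (2 ^ (q - 1) * A) ^ (1 / q) ≤ 2 * A ^ (1 / q) := by
  rw [mul_rpow (by positivity) hA, ← rpow_mul zero_le_two]
  gcongr
  calc (2 : ℝ) ^ ((q - 1) * (1 / q)) ≤ 2 ^ (1 : ℝ) := by
        refine rpow_le_rpow_of_exponent_le one_le_two ?_
        rw [mul_one_div, div_le_one (by linarith)]
        linarith
    _ = 2 := rpow_one 2

theorem wasserstein_fisher_bound_under_poincare_general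
    (d : ℕ) (γ q : ℝ) (hγ : 0 < γ) (hq : 1 ≤ q)
    (nu mu : EuclideanSpace ℝ (Fin d) → ℝ)
    (hnuC : ContDiff ℝ 1 nu) (hmuC : ContDiff ℝ 1 mu)
    (hnupos : ∀ x, 0 < nu x) (hmupos : ∀ x, 0 < mu x)
    (hnuprob : ∫ x, nu x = 1) (hmuprob : ∫ x, mu x = 1)
    (hPI : ∀ g : EuclideanSpace ℝ (Fin d) → ℝ, ContDiff ℝ 1 g →
      Integrable (fun x => nu x * g x ^ 2) →
      Integrable (fun x => nu x * g x) →
      Integrable (fun x => nu x * ‖gradient g x‖ ^ 2) →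
      (∫ x, nu x * g x ^ 2) - (∫ x, nu x * g x) ^ 2 ≤
        (1 / γ) * ∫ x, nu x * ‖gradient g x‖ ^ 2)
    (hM : Integrable (fun x => (mu x + nu x) * (1 + ‖x‖ ^ 2) ^ (2 * q / 2)))
    (hFI : Integrable (fun x =>
      mu x * ‖gradient (fun y => Real.log (mu y / nu y)) x‖ ^ 2)) :
    wassersteinDist d q
        (volume.withDensity fun x => ENNReal.ofReal (mu x))
        (volume.withDensity fun x => ENNReal.ofReal (nu x)) ≤
      2 * (∫ x, (mu x + nu x) * (1 + ‖x‖ ^ 2) ^ (2 * q / 2)) ^ (1 / (2 * q)) *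
        γ ^ (-(1 / (2 * q))) *
        (∫ x, mu x * ‖gradient (fun y => Real.log (mu y / nu y)) x‖ ^ 2) ^
          (1 / (2 * q)) := by
  simp only [show 2 * q / 2 = q by ring] at hM ⊢
  set M := ∫ x, (mu x + nu x) * (1 + ‖x‖ ^ 2) ^ q
  set I := ∫ x, mu x * ‖gradient (fun y => log (mu y / nu y)) x‖ ^ 2
  set A := ∫ x, ‖x‖ ^ q * |mu x - nu x|
  have hq0 : 0 ≤ q := by linarith
  have hmu : Integrable mu := .of_integral_ne_zero (by simp [hmuprob])
  have hnu : Integrable nu := .of_integral_ne_zero (by simp [hnuprob])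
  have hmu0 x : 0 ≤ mu x := (hmupos x).le
  have hnu0 x : 0 ≤ nu x := (hnupos x).le
  have hM0 : 0 ≤ M :=
    integral_nonneg fun x => mul_nonneg (add_nonneg (hmu0 x) (hnu0 x)) (by positivity)
  have hI0 : 0 ≤ I := integral_nonneg fun x => mul_nonneg (hmu0 x) (by positivity)
  calc wassersteinDist d q _ _ ≤ (2 ^ (q - 1) * A) ^ (1 / q) :=
        wassersteinDist_withDensity_le hq hmuC.continuous.measurable hnuC.continuous.measurable
          hmu0 hnu0 hmu hnu (hmuprob.trans hnuprob.symm)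
          (integrable_norm_rpow_mul_abs_sub hq0 hmu0 hnu0 hmu hnu hM)
    _ ≤ 2 * A ^ (1 / q) := two_rpow_sub_one_mul_rpow_le hq (integral_nonneg fun x => by positivity)
    _ ≤ 2 * (√(2 * M) * √(1 / (2 * γ) * I)) ^ (1 / q) := by
        gcongr
        refine (integral_norm_rpow_mul_abs_sub_le hq0 hmu0 hnu0 hmu hnu hM).trans ?_
        gcongr
        exact PoincareInequality.integral_sqrt_sub_sqrt_sq_le hPI hγ hmuC hnuC hmupos hnupos
          hmuprob hnuprob hFI
    _ = _ := by
        rw [← sqrt_mul (by positivity), sqrt_eq_rpow, ← rpow_mul (by positivity),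
          show 2 * M * (1 / (2 * γ) * I) = M * γ⁻¹ * I by field_simp,
          show 1 / 2 * (1 / q) = 1 / (2 * q) by ring, mul_rpow (by positivity) hI0,
          mul_rpow hM0 (by positivity), inv_rpow hγ.le, ← rpow_neg hγ.le]
        ring

/-- Wasserstein–Fisher bound under a Poincaré inequality:
`W_q(μ,ν) ≤ 2 M_{2q}(μ+ν)^{1/(2q)} γ^{-1/(2q)} I(μ|ν)^{1/(2q)}`. -/
theorem wasserstein_fisher_bound_under_poincare
    (d : ℕ) (hd : 0 < d) (γ q : ℝ) (hγ : 0 < γ) (hq : 1 ≤ q)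
    (nu mu : EuclideanSpace ℝ (Fin d) → ℝ)
    (hnuC : ContDiff ℝ 1 nu) (hmuC : ContDiff ℝ 1 mu)
    (hnupos : ∀ x, 0 < nu x) (hmupos : ∀ x, 0 < mu x)
    (hnuprob : ∫ x, nu x = 1) (hmuprob : ∫ x, mu x = 1)
    (hPI : ∀ g : EuclideanSpace ℝ (Fin d) → ℝ, ContDiff ℝ 1 g →
      Integrable (fun x => nu x * g x ^ 2) →
      Integrable (fun x => nu x * g x) →
      Integrable (fun x => nu x * ‖gradient g x‖ ^ 2) →
      (∫ x, nu x * g x ^ 2) - (∫ x, nu x * g x) ^ 2 ≤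
        (1 / γ) * ∫ x, nu x * ‖gradient g x‖ ^ 2)
    (hM : Integrable (fun x => (mu x + nu x) * (1 + ‖x‖ ^ 2) ^ (2 * q / 2)))
    (hFI : Integrable (fun x =>
      mu x * ‖gradient (fun y => Real.log (mu y / nu y)) x‖ ^ 2)) :
    wassersteinDist d q
        (volume.withDensity fun x => ENNReal.ofReal (mu x))
        (volume.withDensity fun x => ENNReal.ofReal (nu x)) ≤
      2 * (∫ x, (mu x + nu x) * (1 + ‖x‖ ^ 2) ^ (2 * q / 2)) ^ (1 / (2 * q)) *
        γ ^ (-(1 / (2 * q))) *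
        (∫ x, mu x * ‖gradient (fun y => Real.log (mu y / nu y)) x‖ ^ 2) ^
          (1 / (2 * q)) :=
  wasserstein_fisher_bound_under_poincare_general d γ q hγ hq nu mu hnuC hmuC hnupos hmupos hnuprob
    hmuprob hPI hM hFI
end

section
/- (Gaussian initialization KL bound) Let ν = e^{−U} with U C¹, ∇U(0) = 0, and suppose U(y) ≤ U(0) + (2L/(1+α)) (1 + ‖y‖^ℓ) ∑_{i=1}^N ‖y‖^{1+α_i} for all y, where 0 < α ≤ α_i ≤ 1. If p₀ = N(0, (1/L) I_d), then H(p₀|ν) ≤ U(0) − (d/2) log(2πe/L) + C (d + ℓ + 1 + α_N)^{(ℓ+1+α_N)/2} for some constant C depending only on N, L, α; in particular H(p₀|ν) = O(d^{(ℓ+1+α_N)/2}). -/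
/-!
The divergence splits as `H(p₀|ν) = -H(p₀) + E_{p₀}[U]`, and the Gaussian entropy is explicit.
The growth bound on `U` reduces `E_{p₀}[U]` to moments `E‖X‖^s`, which polar coordinates
evaluate as `(2/L)^{s/2} Γ((d+s)/2) / Γ(d/2)`; log-convexity of `Γ` bounds this ratio by
`((d+s)/L)^{s/2}`, and every exponent occurring is at most `ℓ + 1 + α_N`.
-/

open MeasureTheory Real Set Module

section Radial

variable {E : Type*} [NormedAddCommGroup E] [InnerProductSpace ℝ E] [FiniteDimensional ℝ E]
  [MeasurableSpace E] [BorelSpace E] [Nontrivial E] (μ : Measure E) [μ.IsAddHaarMeasure]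

theorem integral_rpow_norm_mul_exp_neg_mul_sq_norm {b s : ℝ} (hb : 0 < b)
    (hs : -(finrank ℝ E : ℝ) < s) :
    ∫ x, ‖x‖ ^ s * exp (-b * ‖x‖ ^ 2) ∂μ =
      finrank ℝ E * μ.real (Metric.ball 0 1) *
        (b ^ (-(s + finrank ℝ E) / 2) * (1 / 2) * Gamma ((s + finrank ℝ E) / 2)) := by
  have hn : 1 ≤ finrank ℝ E := finrank_pos
  rw [integral_fun_norm_addHaar μ (fun y => y ^ s * exp (-b * y ^ 2)), nsmul_eq_mul, smul_eq_mul,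
    mul_assoc]
  congr 2
  have hq : -1 < s + (finrank ℝ E - 1 : ℕ) := by push_cast [Nat.cast_sub hn]; linarith
  convert integral_rpow_mul_exp_neg_mul_rpow two_pos hq hb using 1
  · refine setIntegral_congr_fun measurableSet_Ioi fun y (hy : 0 < y) => ?_
    rw [smul_eq_mul, ← rpow_natCast, ← mul_assoc, ← rpow_add hy, rpow_two, add_comm]
  · push_cast [Nat.cast_sub hn]; ring_nf

theorem integrable_rpow_norm_mul_exp_neg_mul_sq_norm {b s : ℝ} (hb : 0 < b)
    (hs : -(finrank ℝ E : ℝ) < s) :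
    Integrable (fun x => ‖x‖ ^ s * exp (-b * ‖x‖ ^ 2)) μ := by
  have hn : 1 ≤ finrank ℝ E := finrank_pos
  have hq : -1 < s + (finrank ℝ E - 1 : ℕ) := by push_cast [Nat.cast_sub hn]; linarith
  rw [integrable_fun_norm_addHaar μ (f := fun y => y ^ s * exp (-b * y ^ 2))]
  refine (integrableOn_rpow_mul_exp_neg_mul_sq hb hq).congr_fun (fun y (hy : 0 < y) => ?_)
    measurableSet_Ioi
  rw [smul_eq_mul, ← rpow_natCast, ← mul_assoc, ← rpow_add hy, add_comm]

end Radial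

theorem Real.Gamma_add_le_rpow_mul_Gamma {x t : ℝ} (hx : 0 < x) (ht : 0 ≤ t) :
    Gamma (x + t) ≤ (x + t) ^ t * Gamma x := by
  rcases ht.eq_or_lt with rfl | ht
  · simp
  have hxt : 0 < x + t := by linarith
  -- log-convexity between `x` and `x + t + 1`, together with `Γ(x + t + 1) = (x + t) Γ(x + t)`
  have hconv := convexOn_log_Gamma.2 (mem_Ioi.2 hx) (mem_Ioi.2 (by linarith : 0 < x + t + 1))
    (by positivity : 0 ≤ 1 / (t + 1)) (by positivity : 0 ≤ t / (t + 1))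
    (by field_simp; ring)
  have hmid : (1 / (t + 1)) • x + (t / (t + 1)) • (x + t + 1) = x + t := by
    simp only [smul_eq_mul]; field_simp; ring
  rw [hmid] at hconv
  simp only [Function.comp, smul_eq_mul, Gamma_add_one hxt.ne',
    log_mul hxt.ne' (Gamma_pos_of_pos hxt).ne'] at hconv
  have hlog : log (Gamma (x + t)) ≤ t * log (x + t) + log (Gamma x) := by
    have h := mul_le_mul_of_nonneg_left hconv (by positivity : (0:ℝ) ≤ t + 1)
    field_simp at h
    nlinarith
  rw [← exp_le_exp, exp_log (Gamma_pos_of_pos hxt), exp_add, exp_log (Gamma_pos_of_pos hx),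
    mul_comm t, ← rpow_def_of_pos hxt] at hlog
  exact hlog

section GaussianDensity

variable {V : Type*} [NormedAddCommGroup V] [InnerProductSpace ℝ V]

/-- The density of `p₀ = N(0, L⁻¹ I)` with respect to `volume`. -/
noncomputable def gaussianDensity (L : ℝ) (x : V) : ℝ :=
  (L / (2 * π)) ^ (finrank ℝ V / 2 : ℝ) * exp (-(L * ‖x‖ ^ 2) / 2)

variable {L : ℝ}

theorem gaussianDensity_eq (L : ℝ) (x : V) :
    gaussianDensity L x = (L / (2 * π)) ^ (finrank ℝ V / 2 : ℝ) * exp (-(L / 2) * ‖x‖ ^ 2) := by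
  rw [gaussianDensity]; ring_nf

theorem gaussianDensity_pos (hL : 0 < L) (x : V) : 0 < gaussianDensity L x := by
  unfold gaussianDensity; positivity

theorem gaussianDensity_mul_log_gaussianDensity (hL : 0 < L) (x : V) :
    gaussianDensity L x * log (gaussianDensity L x) =
      (finrank ℝ V / 2 : ℝ) * log (L / (2 * π)) * gaussianDensity L x -
        L / 2 * (gaussianDensity L x * ‖x‖ ^ 2) := by
  rw [gaussianDensity, log_mul (by positivity) (exp_pos _).ne', log_rpow (by positivity), log_exp]
  ring

theorem gaussianDensity_mul_log_div_exp_neg (hL : 0 < L) (u : ℝ) (x : V) :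
    gaussianDensity L x * log (gaussianDensity L x / exp (-u)) =
      gaussianDensity L x * log (gaussianDensity L x) + gaussianDensity L x * u := by
  rw [log_div (gaussianDensity_pos hL x).ne' (exp_pos _).ne', log_exp]
  ring

variable [FiniteDimensional ℝ V] [MeasurableSpace V] [BorelSpace V]

theorem integral_gaussianDensity (hL : 0 < L) : ∫ x : V, gaussianDensity L x = 1 := by
  simp_rw [gaussianDensity_eq]
  rw [integral_const_mul, GaussianFourier.integral_rexp_neg_mul_sq_norm (by positivity),
    ← mul_rpow (by positivity) (by positivity)]
  convert one_rpow _ using 2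
  field_simp

variable [Nontrivial V]

theorem integrable_gaussianDensity_mul_rpow_norm (hL : 0 < L) {s : ℝ}
    (hs : -(finrank ℝ V : ℝ) < s) :
    Integrable fun x : V => gaussianDensity L x * ‖x‖ ^ s := by
  simp_rw [gaussianDensity_eq, mul_assoc, mul_comm (exp _)]
  exact (integrable_rpow_norm_mul_exp_neg_mul_sq_norm _ (by positivity) hs).const_mul _

theorem integral_gaussianDensity_mul_rpow_norm (hL : 0 < L) {s : ℝ}
    (hs : -(finrank ℝ V : ℝ) < s) :
    ∫ x : V, gaussianDensity L x * ‖x‖ ^ s =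
      (2 / L) ^ (s / 2) * Gamma ((s + finrank ℝ V) / 2) / Gamma (finrank ℝ V / 2) := by
  have hn : (0 : ℝ) < finrank ℝ V := by exact_mod_cast finrank_pos
  have hb : 0 < L / 2 := by positivity
  -- the volume of the unit ball cancels against the normalisation `∫ gaussianDensity L = 1`
  have hI₀ := integral_rpow_norm_mul_exp_neg_mul_sq_norm (volume : Measure V) hb
    (s := 0) (by linarith)
  have hIs := integral_rpow_norm_mul_exp_neg_mul_sq_norm (volume : Measure V) hb hs
  simp only [rpow_zero, one_mul, zero_add] at hI₀
  have hnorm := integral_gaussianDensity (V := V) hL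
  simp_rw [gaussianDensity_eq, mul_assoc, mul_comm (exp _), integral_const_mul] at hnorm ⊢
  rw [hI₀] at hnorm
  have hb' : (L / 2) ^ (-s / 2) = (2 / L) ^ (s / 2) := by
    rw [neg_div, rpow_neg hb.le, ← inv_rpow hb.le, inv_div]
  rw [hIs, show -(s + finrank ℝ V) / 2 = -s / 2 + -(finrank ℝ V : ℝ) / 2 by ring, rpow_add hb, hb',
    eq_div_iff (Gamma_pos_of_pos (by positivity)).ne']
  linear_combination (2 / L) ^ (s / 2) * Gamma ((s + finrank ℝ V) / 2) * hnorm

theorem integrable_gaussianDensity (hL : 0 < L) : Integrable fun x : V => gaussianDensity L x := by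
  have hn : (0 : ℝ) < finrank ℝ V := by exact_mod_cast finrank_pos
  simpa only [rpow_zero, mul_one] using
    integrable_gaussianDensity_mul_rpow_norm (V := V) hL (s := 0) (by linarith)

theorem integrable_gaussianDensity_mul_sq_norm (hL : 0 < L) :
    Integrable fun x : V => gaussianDensity L x * ‖x‖ ^ 2 := by
  have hn : (0 : ℝ) < finrank ℝ V := by exact_mod_cast finrank_pos
  simpa only [rpow_two] using
    integrable_gaussianDensity_mul_rpow_norm (V := V) hL (s := 2) (by linarith)

theorem integral_gaussianDensity_mul_sq_norm (hL : 0 < L) :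
    ∫ x : V, gaussianDensity L x * ‖x‖ ^ 2 = finrank ℝ V / L := by
  have hn : (0 : ℝ) < finrank ℝ V := by exact_mod_cast finrank_pos
  have h := integral_gaussianDensity_mul_rpow_norm (V := V) hL (s := 2) (by linarith)
  simp only [rpow_two] at h
  rw [show (2 + finrank ℝ V : ℝ) / 2 = finrank ℝ V / 2 + 1 by ring,
    Gamma_add_one (by positivity), div_self two_ne_zero, rpow_one] at h
  rw [h]
  field_simp [(Gamma_pos_of_pos (by positivity : (0 : ℝ) < finrank ℝ V / 2)).ne']

theorem integral_gaussianDensity_mul_rpow_norm_le (hL : 0 < L) {s : ℝ} (hs : 0 ≤ s) :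
    ∫ x : V, gaussianDensity L x * ‖x‖ ^ s ≤ ((finrank ℝ V + s) / L) ^ (s / 2) := by
  have hn : (0 : ℝ) < finrank ℝ V := by exact_mod_cast finrank_pos
  have hΓ := Gamma_add_le_rpow_mul_Gamma (x := finrank ℝ V / 2) (t := s / 2) (by positivity)
    (by positivity)
  rw [integral_gaussianDensity_mul_rpow_norm hL (by linarith),
    div_le_iff₀ (Gamma_pos_of_pos (by positivity)),
    show (finrank ℝ V + s) / L = 2 / L * ((finrank ℝ V / 2 + s / 2)) by field_simp,
    mul_rpow (by positivity) (by positivity), mul_assoc]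
  rw [show (s + finrank ℝ V) / 2 = finrank ℝ V / 2 + s / 2 by ring]
  gcongr

theorem integrable_gaussianDensity_mul_log_gaussianDensity (hL : 0 < L) :
    Integrable fun x : V => gaussianDensity L x * log (gaussianDensity L x) := by
  simp_rw [gaussianDensity_mul_log_gaussianDensity hL]
  exact ((integrable_gaussianDensity hL).const_mul _).sub
    ((integrable_gaussianDensity_mul_sq_norm hL).const_mul _)

theorem integral_gaussianDensity_mul_log_gaussianDensity (hL : 0 < L) :
    ∫ x : V, gaussianDensity L x * log (gaussianDensity L x) =
      -(finrank ℝ V / 2 : ℝ) * log (2 * π * exp 1 / L) := by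
  simp_rw [gaussianDensity_mul_log_gaussianDensity hL]
  rw [integral_sub ((integrable_gaussianDensity hL).const_mul _)
      ((integrable_gaussianDensity_mul_sq_norm hL).const_mul _), integral_const_mul,
    integral_const_mul, integral_gaussianDensity hL, integral_gaussianDensity_mul_sq_norm hL,
    log_div (by positivity) hL.ne', log_div hL.ne' (by positivity),
    log_mul (by positivity) (exp_pos _).ne', log_exp]
  field_simp
  ring

theorem integrable_gaussianDensity_mul_of_integrable_mul_log_div {U : V → ℝ} (hL : 0 < L)
    (h : Integrable fun x => gaussianDensity L x * log (gaussianDensity L x / exp (-U x))) :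
    Integrable fun x => gaussianDensity L x * U x := by
  simp_rw [gaussianDensity_mul_log_div_exp_neg hL] at h
  exact (h.sub (integrable_gaussianDensity_mul_log_gaussianDensity hL)).congr
    (ae_of_all _ fun x => add_sub_cancel_left _ _)

theorem integral_gaussianDensity_mul_log_div_exp_neg {U : V → ℝ} (hL : 0 < L)
    (h : Integrable fun x => gaussianDensity L x * log (gaussianDensity L x / exp (-U x))) :
    ∫ x, gaussianDensity L x * log (gaussianDensity L x / exp (-U x)) =
      -(finrank ℝ V / 2 : ℝ) * log (2 * π * exp 1 / L) + ∫ x, gaussianDensity L x * U x := by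
  simp_rw [gaussianDensity_mul_log_div_exp_neg hL]
  rw [integral_add (integrable_gaussianDensity_mul_log_gaussianDensity hL)
    (integrable_gaussianDensity_mul_of_integrable_mul_log_div hL h),
    integral_gaussianDensity_mul_log_gaussianDensity hL]

theorem integral_gaussianDensity_mul_rpow_norm_le_of_le (hL : 0 < L) {s S : ℝ} (hs : 0 ≤ s)
    (hsS : s ≤ S) :
    ∫ x : V, gaussianDensity L x * ‖x‖ ^ s ≤ (max 1 L⁻¹ * (finrank ℝ V + S)) ^ (S / 2) := by
  have hn : (1 : ℝ) ≤ finrank ℝ V := by exact_mod_cast finrank_pos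
  have hbase : (finrank ℝ V + s) / L ≤ max 1 L⁻¹ * (finrank ℝ V + S) := by
    rw [div_eq_inv_mul]
    gcongr
    exact le_max_right _ _
  have hone : 1 ≤ max 1 L⁻¹ * (finrank ℝ V + S) := by
    nlinarith [le_max_left 1 L⁻¹]
  calc ∫ x : V, gaussianDensity L x * ‖x‖ ^ s ≤ ((finrank ℝ V + s) / L) ^ (s / 2) :=
        integral_gaussianDensity_mul_rpow_norm_le hL hs
    _ ≤ (max 1 L⁻¹ * (finrank ℝ V + S)) ^ (s / 2) := by gcongr
    _ ≤ (max 1 L⁻¹ * (finrank ℝ V + S)) ^ (S / 2) := by gcongr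

theorem integral_gaussianDensity_mul_le_add_sum_moments (hL : 0 < L) {U : V → ℝ} {A ℓ : ℝ}
    {ι : Type*} [Fintype ι] {β : ι → ℝ} (hℓ : 0 ≤ ℓ) (hβ : ∀ i, 0 < β i)
    (hU : ∀ y : V, U y ≤ U 0 + A * (1 + ‖y‖ ^ ℓ) * ∑ i, ‖y‖ ^ β i)
    (hpU : Integrable fun x => gaussianDensity L x * U x) :
    ∫ x, gaussianDensity L x * U x ≤
      U 0 + A * ∑ i, ((∫ x : V, gaussianDensity L x * ‖x‖ ^ β i) +
        ∫ x : V, gaussianDensity L x * ‖x‖ ^ (ℓ + β i)) := by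
  have hn : (0 : ℝ) < finrank ℝ V := by exact_mod_cast finrank_pos
  have hmom : ∀ s : ℝ, 0 ≤ s → Integrable fun x : V => gaussianDensity L x * ‖x‖ ^ s :=
    fun s hs => integrable_gaussianDensity_mul_rpow_norm hL (by linarith)
  have hsum : ∀ i, Integrable fun x : V =>
      gaussianDensity L x * ‖x‖ ^ β i + gaussianDensity L x * ‖x‖ ^ (ℓ + β i) :=
    fun i => (hmom _ (hβ i).le).add (hmom _ (by linarith [hβ i]))
  have hpt : ∀ x : V, gaussianDensity L x * U x ≤ U 0 * gaussianDensity L x +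
      A * ∑ i, (gaussianDensity L x * ‖x‖ ^ β i + gaussianDensity L x * ‖x‖ ^ (ℓ + β i)) := by
    intro x
    have hsplit : ∀ i, ‖x‖ ^ (ℓ + β i) = ‖x‖ ^ ℓ * ‖x‖ ^ β i := fun i =>
      rpow_add' (norm_nonneg x) (by linarith [hβ i])
    calc gaussianDensity L x * U x
        ≤ gaussianDensity L x * (U 0 + A * (1 + ‖x‖ ^ ℓ) * ∑ i, ‖x‖ ^ β i) :=
          mul_le_mul_of_nonneg_left (hU x) (gaussianDensity_pos hL x).le
      _ = _ := by simp only [hsplit, Finset.sum_add_distrib, ← Finset.mul_sum]; ring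
  calc ∫ x, gaussianDensity L x * U x
      ≤ ∫ x, (U 0 * gaussianDensity L x + A * ∑ i, (gaussianDensity L x * ‖x‖ ^ β i +
          gaussianDensity L x * ‖x‖ ^ (ℓ + β i))) :=
        integral_mono hpU (((integrable_gaussianDensity hL).const_mul _).add
          ((integrable_finsetSum _ fun i _ => hsum i).const_mul _)) hpt
    _ = _ := by
      rw [integral_add ((integrable_gaussianDensity hL).const_mul _)
          ((integrable_finsetSum _ fun i _ => hsum i).const_mul _), integral_const_mul,
        integral_gaussianDensity hL, mul_one, integral_const_mul,
        integral_finsetSum _ fun i _ => hsum i]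
      congr 2
      exact Finset.sum_congr rfl fun i _ =>
        integral_add (hmom _ (hβ i).le) (hmom _ (by linarith [hβ i]))

theorem integral_gaussianDensity_mul_le_of_le_growth (hL : 0 < L) {U : V → ℝ} {A ℓ S : ℝ}
    {ι : Type*} [Fintype ι] {β : ι → ℝ} (hA : 0 ≤ A) (hℓ : 0 ≤ ℓ) (hβ : ∀ i, 0 < β i)
    (hβS : ∀ i, ℓ + β i ≤ S) (hU : ∀ y : V, U y ≤ U 0 + A * (1 + ‖y‖ ^ ℓ) * ∑ i, ‖y‖ ^ β i)
    (hpU : Integrable fun x => gaussianDensity L x * U x) :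
    ∫ x, gaussianDensity L x * U x ≤
      U 0 + A * (2 * Fintype.card ι * (max 1 L⁻¹ * (finrank ℝ V + S)) ^ (S / 2)) := by
  refine (integral_gaussianDensity_mul_le_add_sum_moments hL hℓ hβ hU hpU).trans ?_
  gcongr
  set K := (max 1 L⁻¹ * (finrank ℝ V + S)) ^ (S / 2)
  refine (Finset.sum_le_card_nsmul _ _ (2 * K) fun i _ => ?_).trans_eq
    (by rw [Finset.card_univ, nsmul_eq_mul]; ring)
  have := hβ i
  linarith [integral_gaussianDensity_mul_rpow_norm_le_of_le (V := V) (S := S) hL this.le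
      (by linarith [hβS i]),
    integral_gaussianDensity_mul_rpow_norm_le_of_le (V := V) hL (by linarith) (hβS i)]

end GaussianDensity

theorem gaussian_initialization_kl_bound_general
    (N : ℕ) (hN : 0 < N) (L ℓ : ℝ) (hL : 0 < L) (hℓ : 0 ≤ ℓ)
    (α : Fin N → ℝ) (hα0 : ∀ i, 0 < α i) (hαmono : Monotone α) :
    ∃ C : ℝ, 0 < C ∧
      ∀ (d : ℕ), 0 < d →
      ∀ U : EuclideanSpace ℝ (Fin d) → ℝ, ContDiff ℝ 1 U →
        gradient U 0 = 0 →
        (∀ y, U y ≤ U 0 +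
          (2 * L / (1 + α ⟨0, hN⟩)) * (1 + ‖y‖ ^ ℓ) * ∑ i, ‖y‖ ^ (1 + α i)) →
        (∫ x, Real.exp (-U x) = 1) →
        Integrable (fun x : EuclideanSpace ℝ (Fin d) =>
          ((L / (2 * Real.pi)) ^ ((d : ℝ) / 2) * Real.exp (-(L * ‖x‖ ^ 2) / 2)) *
            Real.log (((L / (2 * Real.pi)) ^ ((d : ℝ) / 2) *
              Real.exp (-(L * ‖x‖ ^ 2) / 2)) / Real.exp (-U x))) →
        ∫ x, ((L / (2 * Real.pi)) ^ ((d : ℝ) / 2) * Real.exp (-(L * ‖x‖ ^ 2) / 2)) *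
            Real.log (((L / (2 * Real.pi)) ^ ((d : ℝ) / 2) *
              Real.exp (-(L * ‖x‖ ^ 2) / 2)) / Real.exp (-U x)) ≤
          U 0 - ((d : ℝ) / 2) * Real.log (2 * Real.pi * Real.exp 1 / L) +
            C * ((d : ℝ) + ℓ + 1 + α ⟨N - 1, Nat.sub_lt hN Nat.one_pos⟩) ^
              ((ℓ + 1 + α ⟨N - 1, Nat.sub_lt hN Nat.one_pos⟩) / 2) := by
  set S := ℓ + 1 + α ⟨N - 1, Nat.sub_lt hN Nat.one_pos⟩
  have hA : 0 < 2 * L / (1 + α ⟨0, hN⟩) := by have := hα0 ⟨0, hN⟩; positivity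
  have hαS : ∀ i, ℓ + (1 + α i) ≤ S := fun i => by
    have := hαmono (show i ≤ ⟨N - 1, Nat.sub_lt hN Nat.one_pos⟩ from Nat.le_sub_one_of_lt i.2)
    linarith
  have hS : 0 ≤ S := by linarith [hαS ⟨0, hN⟩, hα0 ⟨0, hN⟩]
  refine ⟨2 * L / (1 + α ⟨0, hN⟩) * (2 * N) * max 1 L⁻¹ ^ (S / 2), by positivity, ?_⟩
  intro d hd U _ _ hU _ hKL
  have : Nontrivial (EuclideanSpace ℝ (Fin d)) :=
    Module.nontrivial_of_finrank_pos (R := ℝ) (by rwa [finrank_euclideanSpace_fin])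
  have hp : ∀ x : EuclideanSpace ℝ (Fin d), gaussianDensity L x =
      (L / (2 * π)) ^ ((d : ℝ) / 2) * exp (-(L * ‖x‖ ^ 2) / 2) := by
    simp [gaussianDensity]
  simp only [← hp] at hKL ⊢
  have hEU := integral_gaussianDensity_mul_le_of_le_growth hL (β := fun i => 1 + α i) hA.le hℓ
    (fun i => by linarith [hα0 i]) hαS hU
    (integrable_gaussianDensity_mul_of_integrable_mul_log_div hL hKL)
  rw [finrank_euclideanSpace_fin, Fintype.card_fin,
    mul_rpow (le_max_of_le_left zero_le_one) (by positivity)] at hEU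
  rw [integral_gaussianDensity_mul_log_div_exp_neg hL hKL, finrank_euclideanSpace_fin,
    show (d : ℝ) + ℓ + 1 + α ⟨N - 1, Nat.sub_lt hN Nat.one_pos⟩ = d + S by ring]
  linarith

/-- KL divergence of the Gaussian initialization `p₀ = N(0, (1/L)I)`
from `ν = e^{-U}` is `O(d^{(ℓ+1+α_N)/2})`, with a constant depending only on the
mixture-smoothness parameters. -/
theorem gaussian_initialization_kl_bound
    (N : ℕ) (hN : 0 < N) (L ℓ : ℝ) (hL : 0 < L) (hℓ : 0 ≤ ℓ)
    (α : Fin N → ℝ) (hα0 : ∀ i, 0 < α i) (hα1 : ∀ i, α i ≤ 1) (hαmono : Monotone α) :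
    ∃ C : ℝ, 0 < C ∧
      ∀ (d : ℕ), 0 < d →
      ∀ U : EuclideanSpace ℝ (Fin d) → ℝ, ContDiff ℝ 1 U →
        gradient U 0 = 0 →
        (∀ y, U y ≤ U 0 +
          (2 * L / (1 + α ⟨0, hN⟩)) * (1 + ‖y‖ ^ ℓ) * ∑ i, ‖y‖ ^ (1 + α i)) →
        (∫ x, Real.exp (-U x) = 1) →
        Integrable (fun x : EuclideanSpace ℝ (Fin d) =>
          ((L / (2 * Real.pi)) ^ ((d : ℝ) / 2) * Real.exp (-(L * ‖x‖ ^ 2) / 2)) *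
            Real.log (((L / (2 * Real.pi)) ^ ((d : ℝ) / 2) *
              Real.exp (-(L * ‖x‖ ^ 2) / 2)) / Real.exp (-U x))) →
        ∫ x, ((L / (2 * Real.pi)) ^ ((d : ℝ) / 2) * Real.exp (-(L * ‖x‖ ^ 2) / 2)) *
            Real.log (((L / (2 * Real.pi)) ^ ((d : ℝ) / 2) *
              Real.exp (-(L * ‖x‖ ^ 2) / 2)) / Real.exp (-U x)) ≤
          U 0 - ((d : ℝ) / 2) * Real.log (2 * Real.pi * Real.exp 1 / L) +
            C * ((d : ℝ) + ℓ + 1 + α ⟨N - 1, Nat.sub_lt hN Nat.one_pos⟩) ^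
              ((ℓ + 1 + α ⟨N - 1, Nat.sub_lt hN Nat.one_pos⟩) / 2) :=
  gaussian_initialization_kl_bound_general N hN L ℓ hL hℓ α hα0 hαmono
end
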